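/- arXiv:1312.5943 — 7 statements merged into one kernel-verified Lean document; each statement's English description precedes it below -/
import Mathlib

section
/- Let ℓ ≥ 1 be an odd integer, and let k, n be positive integers with w = n + k. Then ∑_{i=0}^{k} (n+i)^ℓ = ∑_{i=k+1}^{2k} (n+i)^ℓ holds if and only if w^ℓ = 2 ∑_{m odd, 1 ≤ m ≤ ℓ} binom(ℓ, m) · w^{ℓ−m} · ∑_{i=1}^{k} i^m. -/
/-!
Reflecting around `w = n + k`, the left-hand side of (1) is `w^ℓ + ∑_{j=1}^k (w - j)^ℓ` and the
right-hand side is `∑_{j=1}^k (w + j)^ℓ`. By the binomial theorem, in `(w + j)^ℓ - (w - j)^ℓ` the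
even powers of `j` cancel and the odd ones double, so (1) says exactly that `w^ℓ` equals
`2 ∑_{m odd} C(ℓ,m) w^{ℓ-m} ∑_{j=1}^k j^m`.
-/

open Finset

section BinomialDifference

variable {R : Type*} [CommRing R]

theorem add_pow_sub_sub_pow (ℓ : ℕ) (w j : R) :
    (w + j) ^ ℓ - (w - j) ^ ℓ =
      2 * ∑ m ∈ (range (ℓ + 1)).filter Odd, ℓ.choose m * w ^ (ℓ - m) * j ^ m := by
  rw [add_comm w, show w - j = -j + w by ring, add_pow, add_pow, ← sum_sub_distrib, sum_filter,
    mul_sum]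
  refine sum_congr rfl fun m _ => ?_
  rcases Nat.even_or_odd m with hm | hm
  · simp [hm.neg_pow, Nat.not_odd_iff_even.2 hm]
  · rw [hm.neg_pow, if_pos hm]; ring

theorem sum_add_pow_sub_sum_sub_pow {ι : Type*} (s : Finset ι) (ℓ : ℕ) (w : R) (x : ι → R) :
    ∑ j ∈ s, (w + x j) ^ ℓ - ∑ j ∈ s, (w - x j) ^ ℓ =
      2 * ∑ m ∈ (range (ℓ + 1)).filter Odd,
        ℓ.choose m * w ^ (ℓ - m) * ∑ j ∈ s, x j ^ m := by
  simp_rw [← sum_sub_distrib, add_pow_sub_sub_pow, ← mul_sum]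
  rw [sum_comm]
  simp_rw [mul_sum]

end BinomialDifference

theorem Finset.sum_range_succ_eq_add_sum_Icc_sub {M : Type*} [AddCommMonoid M]
    (f : ℕ → M) (k : ℕ) :
    ∑ i ∈ range (k + 1), f i = f k + ∑ j ∈ Icc 1 k, f (k - j) := by
  rw [← Ico_add_one_right_eq_Icc, sum_Ico_reflect f 1 le_rfl, sum_range_succ, add_comm,
    Nat.add_sub_cancel, Nat.sub_self, range_eq_Ico]

theorem Finset.sum_Icc_succ_two_mul_eq_sum_Icc_add {M : Type*} [AddCommMonoid M] (f : ℕ → M) (k : ℕ) :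
    ∑ i ∈ Icc (k + 1) (2 * k), f i = ∑ j ∈ Icc 1 k, f (k + j) := by
  rw [two_mul, ← map_add_left_Icc, sum_map]
  rfl

theorem eq_iff_odd_case_general (ℓ k n w : ℕ) (hw : w = n + k) :
    (∑ i ∈ Finset.range (k + 1), (n + i) ^ ℓ =
        ∑ i ∈ Finset.Icc (k + 1) (2 * k), (n + i) ^ ℓ) ↔
      w ^ ℓ = 2 * ∑ m ∈ (Finset.range (ℓ + 1)).filter (fun m => Odd m),
        ℓ.choose m * w ^ (ℓ - m) * ∑ i ∈ Finset.Icc 1 k, i ^ m := by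
  have hleft : ∑ i ∈ range (k + 1), (((n + i) ^ ℓ : ℕ) : ℤ) =
      (w : ℤ) ^ ℓ + ∑ j ∈ Icc 1 k, ((w : ℤ) - j) ^ ℓ := by
    rw [sum_range_succ_eq_add_sum_Icc_sub]
    refine congr_arg₂ _ (by push_cast [hw]; rfl) (sum_congr rfl fun j hj => ?_)
    rw [mem_Icc] at hj
    push_cast [hw, Nat.cast_sub hj.2]
    ring
  have hright : ∑ i ∈ Icc (k + 1) (2 * k), (((n + i) ^ ℓ : ℕ) : ℤ) =
      ∑ j ∈ Icc 1 k, ((w : ℤ) + j) ^ ℓ := by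
    rw [sum_Icc_succ_two_mul_eq_sum_Icc_add]
    push_cast [hw, add_assoc]
    rfl
  rw [← Nat.cast_inj (R := ℤ), ← Nat.cast_inj (R := ℤ), Nat.cast_sum, Nat.cast_sum, hleft, hright,
    ← eq_sub_iff_add_eq, sum_add_pow_sub_sum_sub_pow]
  push_cast
  rfl

/-- For odd `ℓ ≥ 1`, with `w = n + k`, equation (1) holds iff
`w^ℓ = 2 ∑_{m odd, 1 ≤ m ≤ ℓ} C(ℓ,m) w^{ℓ-m} ∑_{i=1}^k i^m`. -/
theorem eq_iff_odd_case (ℓ k n w : ℕ) (hℓ : 1 ≤ ℓ) (hodd : Odd ℓ)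
    (hk : 0 < k) (hn : 0 < n) (hw : w = n + k) :
    (∑ i ∈ Finset.range (k + 1), (n + i) ^ ℓ =
        ∑ i ∈ Finset.Icc (k + 1) (2 * k), (n + i) ^ ℓ) ↔
      w ^ ℓ = 2 * ∑ m ∈ (Finset.range (ℓ + 1)).filter (fun m => Odd m),
        ℓ.choose m * w ^ (ℓ - m) * ∑ i ∈ Finset.Icc 1 k, i ^ m :=
  eq_iff_odd_case_general ℓ k n w hw
end

section
/- Let ℓ ≥ 1 and let k, n be positive integers satisfying ∑_{i=0}^{k} (n+i)^ℓ = ∑_{i=k+1}^{2k} (n+i)^ℓ, and set w = n + k. Then the radical of k(k+1) (the product of all primes dividing k(k+1)) divides w; in particular w is even. -/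
/-!
Reduce equation (1) modulo a prime `p ∣ k(k+1)`. If `p ∣ k`, the summand `(n+i)^ℓ` is `k`-periodic
in `i` mod `p`, so the right-hand side cancels every term of the left-hand side except `n^ℓ`; if
`p ∣ k + 1` it is `(k+1)`-periodic and only `(n+k)^ℓ` survives. Either way `p ∣ n + k = w`.
Since `k(k+1)` is even, `2` is among these primes.
-/

open Finset

theorem sum_Icc_succ_two_mul_eq_sum_range {M : Type*} [AddCommMonoid M] (f : ℕ → M) (k : ℕ) :
    ∑ i ∈ Icc (k + 1) (2 * k), f i = ∑ i ∈ range k, f (k + 1 + i) := by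
  rw [← Ico_add_one_right_eq_Icc, sum_Ico_eq_sum_range, show 2 * k + 1 - (k + 1) = k by omega]

section Periodic

variable {M : Type*} [AddCancelCommMonoid M] {g : ℕ → M} {k : ℕ}

theorem eq_zero_of_sum_range_succ_eq_of_periodic (hg : Function.Periodic g k)
    (h : ∑ i ∈ range (k + 1), g i = ∑ i ∈ range k, g (k + 1 + i)) : g 0 = 0 := by
  rw [sum_range_succ'] at h
  refine add_eq_left.mp (h.trans (sum_congr rfl fun i _ => ?_))
  rw [← hg (i + 1)]
  ac_rfl

theorem eq_zero_of_sum_range_succ_eq_of_periodic_succ (hg : Function.Periodic g (k + 1))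
    (h : ∑ i ∈ range (k + 1), g i = ∑ i ∈ range k, g (k + 1 + i)) : g k = 0 := by
  rw [sum_range_succ] at h
  refine add_eq_left.mp (h.trans (sum_congr rfl fun i _ => ?_))
  rw [add_comm, hg i]

end Periodic

theorem prime_dvd_add_of_sum_pow_eq {p ℓ k n : ℕ} (hp : p.Prime) (hℓ : ℓ ≠ 0)
    (heq : ∑ i ∈ range (k + 1), (n + i) ^ ℓ = ∑ i ∈ range k, (n + (k + 1 + i)) ^ ℓ)
    (hpk : p ∣ k * (k + 1)) : p ∣ n + k := by
  have := Fact.mk hp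
  set g : ℕ → ZMod p := fun i => ((n + i : ℕ) : ZMod p) ^ ℓ
  have hg : ∑ i ∈ range (k + 1), g i = ∑ i ∈ range k, g (k + 1 + i) := by
    simpa [g] using congrArg (Nat.cast : ℕ → ZMod p) heq
  have periodic_of_dvd {d : ℕ} (hd : p ∣ d) : Function.Periodic g d := fun i => by
    simp [g, (ZMod.natCast_eq_zero_iff d p).mpr hd]
  rw [← ZMod.natCast_eq_zero_iff]
  rcases hp.dvd_mul.mp hpk with hdvd | hdvd
  · have hn : (n : ZMod p) = 0 := by
      simpa [g, hℓ] using eq_zero_of_sum_range_succ_eq_of_periodic (periodic_of_dvd hdvd) hg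
    simp [hn, (ZMod.natCast_eq_zero_iff k p).mpr hdvd]
  · simpa [g, hℓ] using eq_zero_of_sum_range_succ_eq_of_periodic_succ (periodic_of_dvd hdvd) hg

theorem radical_dvd_w_general (ℓ k n w : ℕ) (hℓ : 1 ≤ ℓ)
    (hw : w = n + k)
    (heq : ∑ i ∈ Finset.range (k + 1), (n + i) ^ ℓ =
        ∑ i ∈ Finset.Icc (k + 1) (2 * k), (n + i) ^ ℓ) :
    (∏ p ∈ (k * (k + 1)).primeFactors, p) ∣ w ∧ 2 ∣ w := by
  rw [sum_Icc_succ_two_mul_eq_sum_range] at heq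
  have prime_dvd_w {p : ℕ} (hp : p.Prime) (hpk : p ∣ k * (k + 1)) : p ∣ w :=
    hw ▸ prime_dvd_add_of_sum_pow_eq hp (by omega) heq hpk
  refine ⟨prod_primes_dvd w (fun p hp => (Nat.prime_of_mem_primeFactors hp).prime)
    (fun p hp => prime_dvd_w (Nat.prime_of_mem_primeFactors hp) (Nat.dvd_of_mem_primeFactors hp)), ?_⟩
  exact prime_dvd_w Nat.prime_two (Nat.even_mul_succ_self k).two_dvd

/-- If `(k, n)` is a positive solution of equation (1) for some `ℓ ≥ 1` and `w = n + k`,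
then the radical of `k(k+1)` divides `w`; in particular `w` is even. -/
theorem radical_dvd_w (ℓ k n w : ℕ) (hℓ : 1 ≤ ℓ) (hk : 0 < k) (hn : 0 < n)
    (hw : w = n + k)
    (heq : ∑ i ∈ Finset.range (k + 1), (n + i) ^ ℓ =
        ∑ i ∈ Finset.Icc (k + 1) (2 * k), (n + i) ^ ℓ) :
    (∏ p ∈ (k * (k + 1)).primeFactors, p) ∣ w ∧ 2 ∣ w :=
  radical_dvd_w_general ℓ k n w hℓ hw heq
end

section
/- Let ℓ ≥ 2 be even, let k, n be positive integers satisfying ∑_{i=0}^{k} (n+i)^ℓ = ∑_{i=k+1}^{2k} (n+i)^ℓ, and set w = n + k. Then every odd prime p dividing w + 1 satisfies p ≡ 1 (mod 2^{ν₂(ℓ)+1}). -/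
/-!
Modulo a prime `p ∣ n + k + 1` we have `n ≡ -(k + 1)`, so for even `ℓ` the left side of (1)
becomes `1^ℓ + ⋯ + (k + 1)^ℓ` and the right side `0^ℓ + ⋯ + (k - 1)^ℓ`; hence
`k^ℓ + (k + 1)^ℓ ≡ 0`. Then `x = k / (k + 1)` satisfies `x^ℓ = -1` in `ZMod p`, so for
`ℓ = 2^a m` the element `x^m` has order exactly `2^(a + 1)`, which must divide `p - 1`.
-/

open Finset

theorem two_pow_padicValNat_succ_dvd_orderOf {M : Type*} [Monoid M] [HasDistribNeg M] {x : M}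
    {ℓ : ℕ} (hx : x ^ ℓ = -1) (hne : (-1 : M) ≠ 1) :
    2 ^ (padicValNat 2 ℓ + 1) ∣ orderOf x := by
  obtain ⟨m, hm⟩ : 2 ^ padicValNat 2 ℓ ∣ ℓ := pow_padicValNat_dvd
  have hs : (x ^ m) ^ 2 ^ padicValNat 2 ℓ = -1 := by rw [← pow_mul, mul_comm, ← hm, hx]
  have hord : orderOf (x ^ m) = 2 ^ (padicValNat 2 ℓ + 1) :=
    orderOf_eq_prime_pow (by rwa [hs]) (by rw [pow_succ, pow_mul, hs, neg_one_sq])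
  exact hord ▸ orderOf_pow_dvd m

theorem ZMod.modEq_one_of_pow_add_pow_eq_zero {p : ℕ} [hp : Fact p.Prime] (hp2 : p ≠ 2)
    {a b : ZMod p} {ℓ : ℕ} (hb : b ≠ 0) (h : a ^ ℓ + b ^ ℓ = 0) :
    p ≡ 1 [MOD 2 ^ (padicValNat 2 ℓ + 1)] := by
  have : Fact (2 < p) := ⟨hp.out.two_le.lt_of_ne' hp2⟩
  have hx : (a / b) ^ ℓ = -1 := by
    rw [div_pow, div_eq_iff (pow_ne_zero _ hb)]
    linear_combination h
  have hℓ : ℓ ≠ 0 := by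
    rintro rfl
    exact ZMod.neg_one_ne_one (by simpa using hx.symm)
  have hx0 : a / b ≠ 0 := ne_zero_pow hℓ (hx ▸ neg_ne_zero.mpr one_ne_zero)
  have := (two_pow_padicValNat_succ_dvd_orderOf hx ZMod.neg_one_ne_one).trans
    (ZMod.orderOf_dvd_card_sub_one hx0)
  exact ((Nat.modEq_iff_dvd' hp.out.one_le).mpr this).symm

section
variable {R : Type*} [CommRing R] {n : R} {k ℓ : ℕ}

theorem sum_range_add_pow_eq_of_add_eq_zero (heven : Even ℓ) (hn : n + k + 1 = 0) :
    ∑ i ∈ range (k + 1), (n + i) ^ ℓ = ∑ i ∈ range (k + 1), ((i : R) + 1) ^ ℓ := by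
  rw [← sum_range_reflect]
  refine sum_congr rfl fun i hi => ?_
  have hik : i ≤ k := Nat.lt_succ_iff.mp (mem_range.mp hi)
  rw [show k + 1 - 1 - i = k - i by omega, Nat.cast_sub hik, ← heven.neg_pow]
  congr 1
  linear_combination -hn

theorem sum_Icc_add_pow_eq_of_add_eq_zero (hn : n + k + 1 = 0) :
    ∑ i ∈ Icc (k + 1) (2 * k), (n + i) ^ ℓ = ∑ i ∈ range k, (i : R) ^ ℓ := by
  rw [← Ico_add_one_right_eq_Icc, sum_Ico_eq_sum_range, show 2 * k + 1 - (k + 1) = k by omega]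
  refine sum_congr rfl fun i _ => ?_
  push_cast
  congr 1
  linear_combination hn

theorem pow_add_add_one_pow_eq_zero_of_sum_eq (heven : Even ℓ) (hℓ : ℓ ≠ 0)
    (hn : n + k + 1 = 0)
    (heq : ∑ i ∈ range (k + 1), (n + i) ^ ℓ = ∑ i ∈ Icc (k + 1) (2 * k), (n + i) ^ ℓ) :
    (k : R) ^ ℓ + (k + 1) ^ ℓ = 0 := by
  rw [sum_range_add_pow_eq_of_add_eq_zero heven hn, sum_Icc_add_pow_eq_of_add_eq_zero hn] at heq
  have := sum_range_succ' (fun i : ℕ => (i : R) ^ ℓ) (k + 1)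
  rw [sum_range_succ, sum_range_succ] at this
  push_cast at this
  rw [heq, zero_pow hℓ] at this
  linear_combination this
end

theorem odd_prime_dvd_w_add_one_general (ℓ k n w : ℕ) (hℓ : 2 ≤ ℓ) (heven : Even ℓ)
    (hw : w = n + k)
    (heq : ∑ i ∈ Finset.range (k + 1), (n + i) ^ ℓ =
        ∑ i ∈ Finset.Icc (k + 1) (2 * k), (n + i) ^ ℓ) :
    ∀ p : ℕ, p.Prime → Odd p → p ∣ w + 1 →
      p ≡ 1 [MOD 2 ^ (padicValNat 2 ℓ + 1)] := by
  intro p hp hodd hdvd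
  have : Fact p.Prime := ⟨hp⟩
  have hℓ0 : ℓ ≠ 0 := by omega
  have hnk : (n : ZMod p) + k + 1 = 0 := by
    exact_mod_cast (ZMod.natCast_eq_zero_iff (n + k + 1) p).mpr (hw ▸ hdvd)
  have hpow : (k : ZMod p) ^ ℓ + ((k : ZMod p) + 1) ^ ℓ = 0 :=
    pow_add_add_one_pow_eq_zero_of_sum_eq heven hℓ0 hnk (by exact_mod_cast congrArg Nat.cast heq)
  have hk1 : (k : ZMod p) + 1 ≠ 0 := by
    intro h
    rw [h, zero_pow hℓ0, add_zero, pow_eq_zero_iff hℓ0] at hpow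
    simp [hpow] at h
  exact ZMod.modEq_one_of_pow_add_pow_eq_zero (hodd.ne_two_of_dvd_nat dvd_rfl) hk1 hpow

/-- For even `ℓ ≥ 2` and a positive solution `(k, n)` of equation (1) with `w = n + k`,
every odd prime `p` dividing `w + 1` satisfies `p ≡ 1 (mod 2^{ν₂(ℓ)+1})`. -/
theorem odd_prime_dvd_w_add_one (ℓ k n w : ℕ) (hℓ : 2 ≤ ℓ) (heven : Even ℓ)
    (hk : 0 < k) (hn : 0 < n) (hw : w = n + k)
    (heq : ∑ i ∈ Finset.range (k + 1), (n + i) ^ ℓ =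
        ∑ i ∈ Finset.Icc (k + 1) (2 * k), (n + i) ^ ℓ) :
    ∀ p : ℕ, p.Prime → Odd p → p ∣ w + 1 →
      p ≡ 1 [MOD 2 ^ (padicValNat 2 ℓ + 1)] :=
  odd_prime_dvd_w_add_one_general ℓ k n w hℓ heven hw heq
end

section
/- Let ℓ ≥ 1 and let k, n be positive integers satisfying ∑_{i=0}^{k} (n+i)^ℓ = ∑_{i=k+1}^{2k} (n+i)^ℓ, and set w = n + k, K = k(k+1), a = (ℓ−1)(ℓ−2)/(12ℓ), b = (ℓ−1)²(ℓ−2)²/(72ℓ³). Then ℓK + a − b/K ≤ w ≤ ℓK + a (inequalities of real numbers). -/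
/-!
Put `x = w` and `u_j = j / x`. The equation says `x^ℓ = ∑_{j=1}^k ((x + j)^ℓ - (x - j)^ℓ)`, i.e.
`∑_j ((1 + u_j)^ℓ - (1 - u_j)^ℓ) = 1`, and only odd powers of `u_j` survive the binomial expansion.
The terms in `u` and `u³` sum exactly to `T / x + a T² / x³` with `T = ℓK` (as `∑ j = K/2` and
`∑ j³ = K²/4`), so `T x² + a T² ≤ x³` and in particular `T ≤ x`. Then `ℓ u_j ≤ 1`, and the terms
of degree `≥ 5` are controlled by the even part of `(1 + u)^(ℓ-3)` (via `C(ℓ, i+3) C(i+3, 3) =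
C(ℓ, 3) C(ℓ-3, i)`), which `cosh z ≤ exp (z²/2)` bounds; this gives
`x⁵ ≤ T x⁴ + a T² x² + E` with `E ≤ 2 a² T³`. The cubic forces `x ≥ T + a - 2a²/T = T + a - b/K`
once `x ≤ T + a`, and the quintic forces `x ≤ T + a`.
-/

open Finset

lemma one_add_pow_sub_one_sub_pow (u : ℝ) (n : ℕ) :
    (1 + u) ^ n - (1 - u) ^ n = ∑ m ∈ range (n + 1), (u ^ m - (-u) ^ m) * n.choose m := by
  rw [add_comm 1 u, sub_eq_neg_add (1 : ℝ) u, add_pow, add_pow, ← sum_sub_distrib]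
  exact sum_congr rfl fun m _ => by ring

lemma one_add_pow_add_one_sub_pow (u : ℝ) (n : ℕ) :
    (1 + u) ^ n + (1 - u) ^ n = ∑ m ∈ range (n + 1), (u ^ m + (-u) ^ m) * n.choose m := by
  rw [add_comm 1 u, sub_eq_neg_add (1 : ℝ) u, add_pow, add_pow, ← sum_add_distrib]
  exact sum_congr rfl fun m _ => by ring

lemma pow_add_neg_pow_nonneg {u : ℝ} (hu : 0 ≤ u) (m : ℕ) : 0 ≤ u ^ m + (-u) ^ m := by
  rcases m.even_or_odd with hm | hm
  · rw [hm.neg_pow]; positivity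
  · rw [hm.neg_pow]; simp

lemma one_add_pow_add_one_sub_pow_le {u : ℝ} {n : ℕ} (hu : 0 ≤ u) (hnu : n * u ≤ 1)
    (hu1 : u ≤ 1) : (1 + u) ^ n + (1 - u) ^ n ≤ 2 + 2 * (n * u) ^ 2 := by
  have hplus : (1 + u) ^ n ≤ Real.exp (n * u) := by
    rw [Real.exp_nat_mul]
    exact pow_le_pow_left₀ (by linarith) (by linarith [Real.add_one_le_exp u]) n
  have hminus : (1 - u) ^ n ≤ Real.exp (-(n * u)) := by
    rw [← mul_neg, Real.exp_nat_mul]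
    exact pow_le_pow_left₀ (by linarith) (Real.one_sub_le_exp_neg u) n
  have hcosh : Real.exp (n * u) + Real.exp (-(n * u)) ≤ 2 * Real.exp ((n * u) ^ 2 / 2) := by
    linarith [Real.cosh_eq (n * u), Real.cosh_le_exp_half_sq (n * u)]
  have hsq : (n * u) ^ 2 ≤ 1 := by nlinarith [mul_nonneg n.cast_nonneg hu]
  have hexp : Real.exp ((n * u) ^ 2 / 2) ≤ 1 + (n * u) ^ 2 := by
    have habs : |(n * u) ^ 2 / 2| = (n * u) ^ 2 / 2 := abs_of_nonneg (by positivity)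
    have h := (abs_le.1 (Real.abs_exp_sub_one_le (by rw [habs]; linarith))).2
    rw [habs] at h
    linarith
  linarith

lemma one_add_pow_sub_one_sub_pow_add_three (u : ℝ) (n : ℕ) :
    (1 + u) ^ (n + 3) - (1 - u) ^ (n + 3) =
      2 * (n + 3) * u +
        u ^ 3 * ∑ i ∈ range (n + 1), (u ^ i + (-u) ^ i) * (n + 3).choose (i + 3) := by
  rw [one_add_pow_sub_one_sub_pow, sum_range_succ', sum_range_succ', sum_range_succ', mul_sum,
    Nat.choose_one_right]
  have hshift : ∀ i ∈ range (n + 1), (u ^ (i + 1 + 1 + 1) - (-u) ^ (i + 1 + 1 + 1)) *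
      ((n + 3).choose (i + 1 + 1 + 1) : ℝ) =
        u ^ 3 * ((u ^ i + (-u) ^ i) * (n + 3).choose (i + 3)) :=
    fun i _ => by ring
  rw [sum_congr rfl hshift]
  push_cast
  ring

lemma ten_mul_choose_add_three_le (n : ℕ) {i : ℕ} (hi : 2 ≤ i) :
    10 * (n + 3).choose (i + 3) ≤ (n + 3).choose 3 * n.choose i := by
  have h10 : 10 ≤ (i + 3).choose 3 := Nat.choose_le_choose 3 (by omega : 5 ≤ i + 3)
  calc 10 * (n + 3).choose (i + 3) ≤ (n + 3).choose (i + 3) * (i + 3).choose 3 := by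
        rw [mul_comm]; exact Nat.mul_le_mul_left _ h10
    _ = (n + 3).choose 3 * n.choose i := by rw [Nat.choose_mul (by omega)]; simp

lemma two_mul_choose_three_le_sum_pow_add_neg_pow_mul_choose {u : ℝ} (hu : 0 ≤ u) (n : ℕ) :
    2 * ((n + 3).choose 3 : ℝ) ≤
      ∑ i ∈ range (n + 1), (u ^ i + (-u) ^ i) * (n + 3).choose (i + 3) := by
  have h := single_le_sum (f := fun i => (u ^ i + (-u) ^ i) * ((n + 3).choose (i + 3) : ℝ))
    (fun i _ => mul_nonneg (pow_add_neg_pow_nonneg hu i) (Nat.cast_nonneg _))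
    (mem_range.2 n.succ_pos)
  norm_num at h
  linarith

lemma sum_pow_add_neg_pow_mul_choose_add_three_le {u : ℝ} (hu : 0 ≤ u) (n : ℕ) :
    ∑ i ∈ range (n + 1), (u ^ i + (-u) ^ i) * (n + 3).choose (i + 3) ≤
      ((n + 3).choose 3 : ℝ) / 10 * ((1 + u) ^ n + (1 - u) ^ n) + 9 / 5 * (n + 3).choose 3 := by
  set c : ℝ := ((n + 3).choose 3 : ℝ)
  have hterm : ∀ i ∈ range (n + 1), (u ^ i + (-u) ^ i) * (n + 3).choose (i + 3) ≤
      c / 10 * ((u ^ i + (-u) ^ i) * n.choose i) + if i = 0 then 9 / 5 * c else 0 := by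
    intro i _
    match i with
    | 0 => norm_num; linarith
    | 1 => simp
    | i + 2 =>
      have hc : (10 : ℝ) * (n + 3).choose (i + 2 + 3) ≤ c * n.choose (i + 2) := by
        simp only [c]
        exact_mod_cast ten_mul_choose_add_three_le n (by omega : 2 ≤ i + 2)
      have := pow_add_neg_pow_nonneg hu (i + 2)
      simp only [Nat.add_eq_zero_iff, OfNat.ofNat_ne_zero, and_false, if_false, add_zero]
      nlinarith
  calc _ ≤ ∑ i ∈ range (n + 1),
        (c / 10 * ((u ^ i + (-u) ^ i) * n.choose i) + if i = 0 then 9 / 5 * c else 0) :=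
        sum_le_sum hterm
    _ = _ := by
        rw [sum_add_distrib, ← mul_sum, ← one_add_pow_add_one_sub_pow, sum_ite_eq']
        simp

lemma cast_choose_three_add_three (n : ℕ) :
    ((n + 3).choose 3 : ℝ) = (n + 3) * (n + 2) * (n + 1) / 6 := by
  rw [Nat.cast_choose_eq_ascPochhammer_div]
  simp [ascPochhammer_succ_eval]
  ring

lemma le_one_add_pow_sub_one_sub_pow (ℓ : ℕ) {u : ℝ} (hu : 0 ≤ u) :
    2 * ℓ * u + ℓ * (ℓ - 1) * (ℓ - 2) / 3 * u ^ 3 ≤ (1 + u) ^ ℓ - (1 - u) ^ ℓ := by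
  rcases lt_or_ge ℓ 3 with hℓ | hℓ
  · interval_cases ℓ <;> apply le_of_eq <;> push_cast <;> ring
  obtain ⟨n, rfl⟩ := Nat.exists_eq_add_of_le' hℓ
  have h := mul_le_mul_of_nonneg_left
    (two_mul_choose_three_le_sum_pow_add_neg_pow_mul_choose hu n) (pow_nonneg hu 3)
  rw [cast_choose_three_add_three] at h
  rw [one_add_pow_sub_one_sub_pow_add_three]
  push_cast
  linarith

lemma one_add_pow_sub_one_sub_pow_le (ℓ : ℕ) {u : ℝ} (hu : 0 ≤ u) (hℓu : ℓ * u ≤ 1) :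
    (1 + u) ^ ℓ - (1 - u) ^ ℓ ≤
      2 * ℓ * u + ℓ * (ℓ - 1) * (ℓ - 2) / 3 * u ^ 3 +
        ℓ * (ℓ - 1) * (ℓ - 2) * (ℓ - 3) ^ 2 / 30 * u ^ 5 := by
  rcases lt_or_ge ℓ 3 with hℓ | hℓ
  · interval_cases ℓ <;> apply le_of_eq <;> push_cast <;> ring
  obtain ⟨n, rfl⟩ := Nat.exists_eq_add_of_le' hℓ
  push_cast at hℓu ⊢
  have hnu : n * u ≤ 1 := by linarith
  have heven := one_add_pow_add_one_sub_pow_le hu hnu (by nlinarith [n.cast_nonneg (α := ℝ)])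
  have hshift := sum_pow_add_neg_pow_mul_choose_add_three_le hu n
  rw [one_add_pow_sub_one_sub_pow_add_three]
  calc 2 * (n + 3) * u + u ^ 3 * ∑ i ∈ range (n + 1), (u ^ i + (-u) ^ i) * (n + 3).choose (i + 3)
      ≤ 2 * (n + 3) * u + u ^ 3 * (((n + 3).choose 3 : ℝ) / 10 * (2 + 2 * (n * u) ^ 2) +
          9 / 5 * (n + 3).choose 3) := by gcongr; exact hshift.trans (by gcongr)
    _ = _ := by rw [cast_choose_three_add_three]; ring

lemma sum_range_cast_add_one (k : ℕ) : ∑ j ∈ range k, ((j : ℝ) + 1) = k * (k + 1) / 2 := by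
  induction k with
  | zero => simp
  | succ k ih => rw [sum_range_succ, ih]; push_cast; ring

lemma sum_range_cast_add_one_pow_three (k : ℕ) :
    ∑ j ∈ range k, ((j : ℝ) + 1) ^ 3 = ((k : ℝ) * (k + 1)) ^ 2 / 4 := by
  induction k with
  | zero => simp
  | succ k ih => rw [sum_range_succ, ih]; push_cast; ring

lemma sum_range_cast_add_one_pow_five (k : ℕ) :
    ∑ j ∈ range k, ((j : ℝ) + 1) ^ 5 = ((k : ℝ) * (k + 1)) ^ 2 * (2 * (k * (k + 1)) - 1) / 12 := by
  induction k with
  | zero => simp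
  | succ k ih => rw [sum_range_succ, ih]; push_cast; ring

lemma le_sum_one_add_pow_sub_one_sub_pow (ℓ k : ℕ) {x : ℝ} (hx : 0 < x) :
    ℓ * (k * (k + 1)) / x + ℓ * (ℓ - 1) * (ℓ - 2) * (k * (k + 1)) ^ 2 / 12 / x ^ 3 ≤
      ∑ j ∈ range k, ((1 + (j + 1) / x) ^ ℓ - (1 - (j + 1) / x) ^ ℓ) := by
  calc _ = ∑ j ∈ range k,
        (2 * ℓ * ((j + 1) / x) + ℓ * (ℓ - 1) * (ℓ - 2) / 3 * ((j + 1) / x) ^ 3) := by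
        simp_rw [div_pow]
        rw [sum_add_distrib, ← mul_sum, ← mul_sum, ← sum_div, ← sum_div,
          sum_range_cast_add_one, sum_range_cast_add_one_pow_three]
        field_simp
        ring
    _ ≤ _ := sum_le_sum fun j _ => le_one_add_pow_sub_one_sub_pow ℓ (by positivity)

lemma sum_one_add_pow_sub_one_sub_pow_le (ℓ k : ℕ) {x : ℝ} (hx : 0 < x) (hℓk : ℓ * k ≤ x) :
    ∑ j ∈ range k, ((1 + (j + 1) / x) ^ ℓ - (1 - (j + 1) / x) ^ ℓ) ≤
      ℓ * (k * (k + 1)) / x + ℓ * (ℓ - 1) * (ℓ - 2) * (k * (k + 1)) ^ 2 / 12 / x ^ 3 +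
        ℓ * (ℓ - 1) * (ℓ - 2) * (ℓ - 3) ^ 2 * (k * (k + 1)) ^ 2 * (2 * (k * (k + 1)) - 1) / 360 /
          x ^ 5 := by
  have hsmall : ∀ j ∈ range k, (ℓ : ℝ) * ((j + 1) / x) ≤ 1 := by
    intro j hj
    have hjk : (j : ℝ) + 1 ≤ k := by exact_mod_cast mem_range.1 hj
    rw [mul_div_assoc', div_le_one hx]
    nlinarith [ℓ.cast_nonneg (α := ℝ)]
  calc _ ≤ ∑ j ∈ range k, (2 * ℓ * ((j + 1) / x) + ℓ * (ℓ - 1) * (ℓ - 2) / 3 * ((j + 1) / x) ^ 3 +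
        ℓ * (ℓ - 1) * (ℓ - 2) * (ℓ - 3) ^ 2 / 30 * ((j + 1) / x) ^ 5) :=
        sum_le_sum fun j hj => one_add_pow_sub_one_sub_pow_le ℓ (by positivity) (hsmall j hj)
    _ = _ := by
        simp_rw [div_pow]
        rw [sum_add_distrib, sum_add_distrib, ← mul_sum, ← mul_sum, ← mul_sum, ← sum_div,
          ← sum_div, ← sum_div, sum_range_cast_add_one, sum_range_cast_add_one_pow_three,
          sum_range_cast_add_one_pow_five]
        field_simp
        ring

lemma sum_one_add_div_pow_sub_one_sub_div_pow_eq_one {ℓ k n : ℕ} (hk : 0 < k)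
    (h : ∑ i ∈ range (k + 1), (n + i) ^ ℓ = ∑ i ∈ Icc (k + 1) (2 * k), (n + i) ^ ℓ) :
    ∑ j ∈ range k, ((1 + (j + 1) / ((n : ℝ) + k)) ^ ℓ - (1 - (j + 1) / ((n : ℝ) + k)) ^ ℓ) = 1 := by
  set x : ℝ := n + k
  have hx : x ≠ 0 := by positivity
  have hR : ∑ i ∈ range (k + 1), ((n : ℝ) + i) ^ ℓ =
      ∑ i ∈ Icc (k + 1) (2 * k), ((n : ℝ) + i) ^ ℓ := by
    exact_mod_cast h
  have hleft : ∑ i ∈ range (k + 1), ((n : ℝ) + i) ^ ℓ =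
      ∑ j ∈ range k, (x - (j + 1)) ^ ℓ + x ^ ℓ := by
    rw [← sum_range_reflect, sum_range_succ']
    congr 1
    refine sum_congr rfl fun j hj => ?_
    rw [show k + 1 - 1 - (j + 1) = k - (j + 1) by omega,
      Nat.cast_sub (by have := mem_range.1 hj; omega)]
    push_cast
    ring
  have hright : ∑ i ∈ Icc (k + 1) (2 * k), ((n : ℝ) + i) ^ ℓ =
      ∑ j ∈ range k, (x + (j + 1)) ^ ℓ := by
    rw [← Ico_add_one_right_eq_Icc, sum_Ico_eq_sum_range, show 2 * k + 1 - (k + 1) = k by omega]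
    refine sum_congr rfl fun j _ => ?_
    push_cast
    ring
  have hxpow : x ^ ℓ * ∑ j ∈ range k, ((1 + (j + 1) / x) ^ ℓ - (1 - (j + 1) / x) ^ ℓ) = x ^ ℓ := by
    rw [mul_sum]
    calc _ = ∑ j ∈ range k, ((x + (j + 1)) ^ ℓ - (x - (j + 1)) ^ ℓ) := by
          refine sum_congr rfl fun j _ => ?_
          rw [mul_sub, ← mul_pow, ← mul_pow, mul_add, mul_sub, mul_one, mul_div_cancel₀ _ hx]
      _ = x ^ ℓ := by rw [sum_sub_distrib]; linarith
  exact mul_left_cancel₀ (pow_ne_zero ℓ hx) (hxpow.trans (mul_one _).symm)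

lemma le_add_of_pow_five_le {T a E x : ℝ} (hT : 0 < T) (ha : 0 ≤ a) (hE : E ≤ 2 * a ^ 2 * T ^ 3)
    (hTx : T ≤ x) (h : x ^ 5 ≤ T * x ^ 4 + a * T ^ 2 * x ^ 2 + E) : x ≤ T + a := by
  by_contra! hlt
  have hx : 0 < x := by linarith
  have hT3 : T ^ 3 ≤ T * x ^ 2 := by
    have := pow_le_pow_left₀ hT.le hTx 2
    nlinarith
  have h1 : x ^ 2 * (x - T) ≤ a * T ^ 2 + 2 * a ^ 2 * T := by
    refine le_of_mul_le_mul_left ?_ (by positivity : 0 < x ^ 2)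
    nlinarith
  have h2 : (T + a) ^ 2 * a < x ^ 2 * (x - T) := by
    calc (T + a) ^ 2 * a ≤ (T + a) ^ 2 * (x - T) := by gcongr; linarith
      _ < x ^ 2 * (x - T) := by gcongr; linarith
  nlinarith

lemma add_sub_le_of_le_pow_three {T a x : ℝ} (hT : 0 < T) (ha : 0 ≤ a) (hTx : T ≤ x)
    (h : T * x ^ 2 + a * T ^ 2 ≤ x ^ 3) (hx : x ≤ T + a) : T + a - 2 * a ^ 2 / T ≤ x := by
  have h1 : a * T ^ 2 ≤ (x - T) * (T + a) ^ 2 :=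
    calc a * T ^ 2 ≤ (x - T) * x ^ 2 := by linarith
      _ ≤ (x - T) * (T + a) ^ 2 := by gcongr; linarith
  have h2 : (a - 2 * a ^ 2 / T) * (T + a) ^ 2 ≤ a * T ^ 2 := by
    have e : (a - 2 * a ^ 2 / T) * (T + a) ^ 2 = a * T ^ 2 - a ^ 3 * (3 * T + 2 * a) / T := by
      field_simp; ring
    have : 0 ≤ a ^ 3 * (3 * T + 2 * a) / T := by positivity
    linarith
  have := le_of_mul_le_mul_right (h2.trans h1) (by positivity : 0 < (T + a) ^ 2)
  linarith

lemma add_sub_le_and_le_add_of_sandwich {T a E x : ℝ} (hT : 0 < T) (ha : 0 ≤ a)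
    (hE : E ≤ 2 * a ^ 2 * T ^ 3) (hx : 0 < x) (hlow : T / x + a * T ^ 2 / x ^ 3 ≤ 1)
    (hup : 1 ≤ T / x + a * T ^ 2 / x ^ 3 + E / x ^ 5) :
    T + a - 2 * a ^ 2 / T ≤ x ∧ x ≤ T + a := by
  have hcubic : T * x ^ 2 + a * T ^ 2 ≤ x ^ 3 := by
    rwa [show T / x + a * T ^ 2 / x ^ 3 = (T * x ^ 2 + a * T ^ 2) / x ^ 3 by field_simp,
      div_le_one (by positivity)] at hlow
  have hTx : T ≤ x := le_of_mul_le_mul_right (by nlinarith : T * x ^ 2 ≤ x * x ^ 2) (by positivity)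
  have hquintic : x ^ 5 ≤ T * x ^ 4 + a * T ^ 2 * x ^ 2 + E := by
    rwa [show T / x + a * T ^ 2 / x ^ 3 + E / x ^ 5 = (T * x ^ 4 + a * T ^ 2 * x ^ 2 + E) / x ^ 5 by
      field_simp, one_le_div (by positivity)] at hup
  have hupper := le_add_of_pow_five_le hT ha hE hTx hquintic
  exact ⟨add_sub_le_of_le_pow_three hT ha hTx hcubic hupper, hupper⟩

lemma cast_sub_one_mul_cast_sub_two_nonneg (ℓ : ℕ) : 0 ≤ ((ℓ : ℝ) - 1) * (ℓ - 2) := by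
  rcases ℓ with _ | _ | ℓ
  · norm_num
  · norm_num
  · push_cast; nlinarith

lemma fifth_order_coeff_le (ℓ : ℕ) (hℓ : 1 ≤ ℓ) {K : ℝ} (hK : 0 ≤ K) :
    ℓ * (ℓ - 1) * (ℓ - 2) * (ℓ - 3) ^ 2 * K ^ 2 * (2 * K - 1) / 360 ≤
      2 * (((ℓ : ℝ) - 1) * (ℓ - 2) / (12 * ℓ)) ^ 2 * (ℓ * K) ^ 3 := by
  have hc : 2 * (((ℓ : ℝ) - 1) * (ℓ - 2)) * (ℓ - 3) ^ 2 ≤ 5 * (((ℓ : ℝ) - 1) * (ℓ - 2)) ^ 2 := by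
    obtain hℓ | hℓ : ℓ ≤ 2 ∨ 3 ≤ ℓ := by omega
    · interval_cases ℓ <;> norm_num
    · have h3 : (3 : ℝ) ≤ ℓ := by exact_mod_cast hℓ
      nlinarith [cast_sub_one_mul_cast_sub_two_nonneg ℓ]
  have hp := cast_sub_one_mul_cast_sub_two_nonneg ℓ
  have hℓ0 : (0 : ℝ) < ℓ := by exact_mod_cast hℓ
  rw [div_le_iff₀ (by norm_num)]
  field_simp
  nlinarith [mul_le_mul_of_nonneg_right hc (by positivity : (0 : ℝ) ≤ ℓ * K ^ 3),
    mul_nonneg (mul_nonneg hp (sq_nonneg ((ℓ : ℝ) - 3))) (by positivity : (0 : ℝ) ≤ ℓ * K ^ 2)]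

theorem w_bounds_general (ℓ k n w : ℕ) (hℓ : 1 ≤ ℓ) (hk : 0 < k)
    (hw : w = n + k)
    (heq : ∑ i ∈ Finset.range (k + 1), (n + i) ^ ℓ =
        ∑ i ∈ Finset.Icc (k + 1) (2 * k), (n + i) ^ ℓ)
    (K a b : ℝ) (hK : K = (k : ℝ) * ((k : ℝ) + 1))
    (ha : a = ((ℓ : ℝ) - 1) * ((ℓ : ℝ) - 2) / (12 * (ℓ : ℝ)))
    (hb : b = ((ℓ : ℝ) - 1) ^ 2 * ((ℓ : ℝ) - 2) ^ 2 / (72 * (ℓ : ℝ) ^ 3)) :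
    (ℓ : ℝ) * K + a - b / K ≤ (w : ℝ) ∧ (w : ℝ) ≤ (ℓ : ℝ) * K + a := by
  have hw' : (w : ℝ) = n + k := by rw [hw]; push_cast; ring
  have hx : (0 : ℝ) < w := by rw [hw']; positivity
  have hsum := sum_one_add_div_pow_sub_one_sub_div_pow_eq_one hk heq
  rw [← hw'] at hsum
  have hK0 : 0 < K := by rw [hK]; positivity
  have hT : 0 < (ℓ : ℝ) * K := by positivity
  have ha0 : 0 ≤ a := by
    rw [ha]; exact div_nonneg (cast_sub_one_mul_cast_sub_two_nonneg ℓ) (by positivity)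
  have haT : (ℓ : ℝ) * (ℓ - 1) * (ℓ - 2) * K ^ 2 / 12 = a * (ℓ * K) ^ 2 := by
    rw [ha]; field_simp
  have hlow := (le_sum_one_add_pow_sub_one_sub_pow ℓ k hx).trans_eq hsum
  rw [← hK, haT] at hlow
  have hTx : ℓ * K ≤ (w : ℝ) :=
    (div_le_one hx).1 ((le_add_of_nonneg_right (by positivity)).trans hlow)
  have hℓk : ℓ * k ≤ (w : ℝ) :=
    le_trans (mul_le_mul_of_nonneg_left (by rw [hK]; nlinarith) (by positivity)) hTx
  have hup := hsum.symm.trans_le (sum_one_add_pow_sub_one_sub_pow_le ℓ k hx hℓk)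
  rw [← hK, haT] at hup
  have hbK : b / K = 2 * a ^ 2 / (ℓ * K) := by rw [ha, hb]; field_simp; ring
  rw [hbK]
  exact add_sub_le_and_le_add_of_sandwich hT ha0 (ha ▸ fifth_order_coeff_le ℓ hℓ hK0.le) hx hlow hup

/-- If `(k, n)` is a positive solution of equation (1) for `ℓ ≥ 1` and `w = n + k`,
`K = k(k+1)`, `a = (ℓ-1)(ℓ-2)/(12ℓ)`, `b = (ℓ-1)²(ℓ-2)²/(72ℓ³)`, then
`ℓK + a - b/K ≤ w ≤ ℓK + a` as real numbers. -/
theorem w_bounds (ℓ k n w : ℕ) (hℓ : 1 ≤ ℓ) (hk : 0 < k) (hn : 0 < n)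
    (hw : w = n + k)
    (heq : ∑ i ∈ Finset.range (k + 1), (n + i) ^ ℓ =
        ∑ i ∈ Finset.Icc (k + 1) (2 * k), (n + i) ^ ℓ)
    (K a b : ℝ) (hK : K = (k : ℝ) * ((k : ℝ) + 1))
    (ha : a = ((ℓ : ℝ) - 1) * ((ℓ : ℝ) - 2) / (12 * (ℓ : ℝ)))
    (hb : b = ((ℓ : ℝ) - 1) ^ 2 * ((ℓ : ℝ) - 2) ^ 2 / (72 * (ℓ : ℝ) ^ 3)) :
    (ℓ : ℝ) * K + a - b / K ≤ (w : ℝ) ∧ (w : ℝ) ≤ (ℓ : ℝ) * K + a :=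
  w_bounds_general ℓ k n w hℓ hk hw heq K a b hK ha hb
end

section
/- Let ℓ ≥ 3 and let k, n be positive integers satisfying ∑_{i=0}^{k} (n+i)^ℓ = ∑_{i=k+1}^{2k} (n+i)^ℓ. Then k(k+1) < (ℓ−2)²/12. -/
/-!
Put `m = n + k` (the middle term) and `K = k(k+1)`. The equation says
`m^ℓ = ∑_{j=1}^k ((m+j)^ℓ - (m-j)^ℓ)`; expanding binomially, only odd powers of `j` survive, and
`2(1 + ⋯ + k) = K`, `4(1³ + ⋯ + k³) = K²` turn it into
`12 m^ℓ = (12ℓK m² + ℓ(ℓ-1)(ℓ-2)K²) m^(ℓ-3) + 12 R`, where `R ≥ 0` collects the terms in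
`j⁵, j⁷, …`.
The real solution is `m ≈ ℓK + (ℓ-3)/12 + 1/(6ℓ)`; when `12K ≥ (ℓ-2)²` it lies strictly between
`ℓK + q` and `ℓK + q + 1`, `q = ⌊(ℓ-3)/12⌋`. Indeed, if `m ≤ ℓK + q` the two leading terms alone
exceed `12 m^ℓ`; if `m > ℓK + q`, then `12 m³` beats them by `ℓ(ℓ-2)K²`, while the terms of `R`
decrease at least by a factor 2 (as `m ≥ 2ℓk`), so `R ≤ 4·C(ℓ,5)·k⁶·m^(ℓ-5)` cannot fill the gap.
-/

open Finset

def powerSum (k t : ℕ) : ℕ := ∑ i ∈ range k, (i + 1) ^ t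

lemma powerSum_one_mul_two (k : ℕ) : powerSum k 1 * 2 = k * (k + 1) := by
  induction k with
  | zero => rfl
  | succ k ih => rw [powerSum, sum_range_succ, add_mul, ← powerSum, ih]; ring

lemma powerSum_three_mul_four (k : ℕ) : powerSum k 3 * 4 = (k * (k + 1)) ^ 2 := by
  induction k with
  | zero => rfl
  | succ k ih => rw [powerSum, sum_range_succ, add_mul, ← powerSum, ih]; ring

lemma powerSum_le (k t : ℕ) : powerSum k t ≤ k ^ (t + 1) :=
  calc powerSum k t ≤ ∑ _i ∈ range k, k ^ t :=
        sum_le_sum fun i hi => Nat.pow_le_pow_left (mem_range.mp hi) t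
    _ = k ^ (t + 1) := by rw [sum_const, card_range, smul_eq_mul, pow_succ']

lemma add_pow_eq_sub_pow_add {x y : ℕ} (h : y ≤ x) (ℓ : ℕ) :
    (x + y) ^ ℓ = (x - y) ^ ℓ +
      ∑ t ∈ range (ℓ + 1), (if Odd t then 2 else 0) * ℓ.choose t * x ^ (ℓ - t) * y ^ t := by
  zify [h]
  rw [add_comm (x : ℤ), add_pow, sub_eq_neg_add, add_pow, ← sub_eq_iff_eq_add', ← sum_sub_distrib]
  refine sum_congr rfl fun t _ => ?_
  rcases Nat.even_or_odd t with ht | ht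
  · simp [ht.neg_pow, Nat.not_odd_iff_even.mpr ht]
  · simp only [ht.neg_pow, neg_mul, sub_neg_eq_add, ht, ↓reduceIte]; ring

/-- The `t`-th term of the binomial expansion of `∑_{j=1}^k ((m+j)^ℓ - (m-j)^ℓ)`. -/
def oddTerm (ℓ k m t : ℕ) : ℕ := (if Odd t then 2 else 0) * ℓ.choose t * m ^ (ℓ - t) * powerSum k t

def oddTail (ℓ k m : ℕ) : ℕ := ∑ t ∈ Ico 5 (ℓ + 1), oddTerm ℓ k m t

lemma pow_add_sum_sub_pow_eq {ℓ k n : ℕ}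
    (heq : ∑ i ∈ range (k + 1), (n + i) ^ ℓ = ∑ i ∈ Icc (k + 1) (2 * k), (n + i) ^ ℓ) :
    (n + k) ^ ℓ + ∑ j ∈ range k, (n + k - (j + 1)) ^ ℓ = ∑ j ∈ range k, (n + k + (j + 1)) ^ ℓ := by
  rw [sum_range_succ, ← sum_range_reflect, ← Ico_add_one_right_eq_Icc,
    sum_Ico_eq_sum_range, show 2 * k + 1 - (k + 1) = k by omega] at heq
  rw [add_comm]
  convert heq using 2
  · refine sum_congr rfl fun j hj => ?_
    have := mem_range.mp hj
    congr 2; omega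
  · congr 1; omega

lemma pow_eq_sum_oddTerm {ℓ k n : ℕ}
    (heq : ∑ i ∈ range (k + 1), (n + i) ^ ℓ = ∑ i ∈ Icc (k + 1) (2 * k), (n + i) ^ ℓ) :
    (n + k) ^ ℓ = ∑ t ∈ range (ℓ + 1), oddTerm ℓ k (n + k) t := by
  have h := pow_add_sum_sub_pow_eq heq
  rw [sum_congr rfl fun j hj => add_pow_eq_sub_pow_add (x := n + k) (y := j + 1)
    (by have := mem_range.mp hj; omega) ℓ, sum_add_distrib, add_comm] at h
  rw [add_left_cancel h, sum_comm]
  refine sum_congr rfl fun t _ => ?_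
  rw [oddTerm, powerSum, mul_sum]

lemma choose_three_mul_six (ℓ : ℕ) : ℓ.choose 3 * 6 = ℓ * (ℓ - 1) * (ℓ - 2) := by
  rw [mul_comm, show 6 = Nat.factorial 3 by rfl, ← Nat.descFactorial_eq_factorial_mul_choose]
  simp only [Nat.descFactorial_succ, tsub_zero, Nat.descFactorial_zero, mul_one]
  ring

lemma twelve_mul_sum_oddTerm {ℓ : ℕ} (hℓ : 3 ≤ ℓ) (k m : ℕ) :
    12 * ∑ t ∈ range (ℓ + 1), oddTerm ℓ k m t =
      (12 * ℓ * (k * (k + 1)) * m ^ 2 + ℓ * (ℓ - 1) * (ℓ - 2) * (k * (k + 1)) ^ 2) * m ^ (ℓ - 3)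
        + 12 * oddTail ℓ k m := by
  have hsplit : ∑ t ∈ range (ℓ + 1), oddTerm ℓ k m t =
      ∑ t ∈ range 5, oddTerm ℓ k m t + oddTail ℓ k m := by
    rcases (show ℓ = 3 ∨ 4 ≤ ℓ by omega) with rfl | h4
    · simp [oddTail, sum_range_succ, oddTerm]
    · exact (sum_range_add_sum_Ico _ (by omega)).symm
  have hhead : ∑ t ∈ range 5, oddTerm ℓ k m t =
      2 * ℓ * m ^ (ℓ - 1) * powerSum k 1 + 2 * ℓ.choose 3 * m ^ (ℓ - 3) * powerSum k 3 := by
    simp [sum_range_succ, oddTerm, Nat.odd_iff]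
  have hpow : m ^ (ℓ - 1) = m ^ 2 * m ^ (ℓ - 3) := by rw [← pow_add]; congr 1; omega
  rw [hsplit, hhead, hpow, ← powerSum_three_mul_four, ← powerSum_one_mul_two,
    ← choose_three_mul_six]
  ring

lemma sum_Ico_le_two_mul {f : ℕ → ℕ} {a : ℕ} (hf : ∀ t, a ≤ t → 2 * f (t + 1) ≤ f t) (b : ℕ) :
    ∑ t ∈ Ico a b, f t ≤ 2 * f a := by
  rcases le_or_gt a b with hab | hba
  · suffices ∑ t ∈ Ico a b, f t + 2 * f b ≤ 2 * f a by omega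
    induction b, hab using Nat.le_induction with
    | base => simp
    | succ b hab ih =>
      rw [sum_Ico_succ_top hab]
      have := hf b hab
      omega
  · simp [Ico_eq_empty_of_le hba.le]

lemma choose_succ_le_mul_choose (n k : ℕ) : n.choose (k + 1) ≤ n * n.choose k :=
  calc n.choose (k + 1) ≤ n.choose (k + 1) * (k + 1) := Nat.le_mul_of_pos_right _ k.succ_pos
    _ = n.choose k * (n - k) := Nat.choose_succ_right_eq n k
    _ ≤ n * n.choose k := by rw [mul_comm]; gcongr; omega

lemma oddTail_le {ℓ k m : ℕ} (hm : 2 * ℓ * k ≤ m) :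
    oddTail ℓ k m ≤ 4 * ℓ.choose 5 * k ^ 6 * m ^ (ℓ - 5) := by
  let f t := ℓ.choose t * k ^ (t + 1) * m ^ (ℓ - t)
  have hf : ∀ t, 5 ≤ t → 2 * f (t + 1) ≤ f t := by
    intro t _
    rcases lt_or_ge t ℓ with ht | ht
    · have hpow : m ^ (ℓ - t) = m * m ^ (ℓ - (t + 1)) := by rw [← pow_succ']; congr 1; omega
      calc 2 * f (t + 1) ≤ 2 * ((ℓ * ℓ.choose t) * k ^ (t + 2) * m ^ (ℓ - (t + 1))) := by
            simp only [f]; gcongr; exact choose_succ_le_mul_choose ℓ t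
        _ = 2 * ℓ * k * (ℓ.choose t * k ^ (t + 1) * m ^ (ℓ - (t + 1))) := by ring
        _ ≤ m * (ℓ.choose t * k ^ (t + 1) * m ^ (ℓ - (t + 1))) := by gcongr
        _ = f t := by simp only [f, hpow]; ring
    · simp [f, Nat.choose_eq_zero_of_lt (show ℓ < t + 1 by omega)]
  calc oddTail ℓ k m ≤ ∑ t ∈ Ico 5 (ℓ + 1), 2 * f t := by
        refine sum_le_sum fun t _ => ?_
        calc oddTerm ℓ k m t ≤ 2 * ℓ.choose t * m ^ (ℓ - t) * k ^ (t + 1) := by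
              unfold oddTerm
              gcongr
              · split_ifs <;> omega
              · exact powerSum_le k t
          _ = 2 * f t := by ring
    _ = 2 * ∑ t ∈ Ico 5 (ℓ + 1), f t := (mul_sum _ _ _).symm
    _ ≤ 2 * (2 * f 5) := by gcongr; exact sum_Ico_le_two_mul hf _
    _ = 4 * ℓ.choose 5 * k ^ 6 * m ^ (ℓ - 5) := by simp only [f]; ring

lemma choose_five_mul_pow_six_lt {ℓ k : ℕ} (hℓ : 5 ≤ ℓ) (hk : 0 < k)
    (hK : (ℓ - 2) ^ 2 ≤ 12 * (k * (k + 1))) :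
    48 * ℓ.choose 5 * k ^ 6 < ℓ ^ 3 * (ℓ - 2) * (k * (k + 1)) ^ 4 := by
  obtain ⟨L, rfl⟩ : ∃ L, ℓ = L + 5 := ⟨ℓ - 5, by omega⟩
  rw [show L + 5 - 2 = L + 3 by omega] at *
  have hC : (L + 5).choose 5 * 120 = (L + 5) * (L + 4) * (L + 3) * (L + 2) * (L + 1) := by
    rw [mul_comm, show 120 = Nat.factorial 5 by rfl, ← Nat.descFactorial_eq_factorial_mul_choose]
    simp only [Nat.descFactorial_succ, Nat.reduceSubDiff, Nat.add_one_sub_one, tsub_zero,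
      Nat.descFactorial_zero, mul_one]
    ring
  have hK4 : k ^ 6 * (k * (k + 1)) ≤ (k * (k + 1)) ^ 4 := by
    calc k ^ 6 * (k * (k + 1)) = k ^ 4 * (k + 1) * k ^ 3 := by ring
      _ ≤ k ^ 4 * (k + 1) * (k + 1) ^ 3 := by gcongr; omega
      _ = (k * (k + 1)) ^ 4 := by ring
  have hpoly : 24 * ((L + 4) * (L + 2) * (L + 1)) < 5 * ((L + 5) ^ 2 * (L + 3) ^ 2) := by nlinarith
  have : 60 * (48 * (L + 5).choose 5 * k ^ 6) < 60 * ((L + 5) ^ 3 * (L + 3) * (k * (k + 1)) ^ 4) :=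
    calc 60 * (48 * (L + 5).choose 5 * k ^ 6)
        = (L + 5) * (L + 3) * k ^ 6 * (24 * ((L + 4) * (L + 2) * (L + 1))) := by
          rw [show 60 * (48 * (L + 5).choose 5 * k ^ 6) = 24 * ((L + 5).choose 5 * 120) * k ^ 6 by
            ring, hC]
          ring
      _ < (L + 5) * (L + 3) * k ^ 6 * (5 * ((L + 5) ^ 2 * (L + 3) ^ 2)) := by gcongr
      _ = 5 * (L + 5) ^ 3 * (L + 3) * k ^ 6 * (L + 3) ^ 2 := by ring
      _ ≤ 5 * (L + 5) ^ 3 * (L + 3) * k ^ 6 * (12 * (k * (k + 1))) := by gcongr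
      _ = 60 * ((L + 5) ^ 3 * (L + 3) * (k ^ 6 * (k * (k + 1)))) := by ring
      _ ≤ 60 * ((L + 5) ^ 3 * (L + 3) * (k * (k + 1)) ^ 4) := by gcongr
  omega

lemma twelve_mul_oddTail_lt {ℓ k m : ℕ} (hℓ : 3 ≤ ℓ) (hk : 0 < k)
    (hK : (ℓ - 2) ^ 2 ≤ 12 * (k * (k + 1))) (hm : ℓ * (k * (k + 1)) ≤ m) :
    12 * oddTail ℓ k m < ℓ * (ℓ - 2) * (k * (k + 1)) ^ 2 * m ^ (ℓ - 3) := by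
  have hm0 : 0 < m := lt_of_lt_of_le (by positivity) hm
  rcases lt_or_ge ℓ 5 with hℓ5 | hℓ5
  · have : 0 < ℓ - 2 := by omega
    rw [oddTail, Ico_eq_empty (by omega), sum_empty]
    positivity
  · have h2k : 2 * ℓ * k ≤ m := calc
      2 * ℓ * k = ℓ * (2 * k) := by ring
      _ ≤ ℓ * (k * (k + 1)) := Nat.mul_le_mul_left ℓ (by nlinarith)
      _ ≤ m := hm
    calc 12 * oddTail ℓ k m ≤ 12 * (4 * ℓ.choose 5 * k ^ 6 * m ^ (ℓ - 5)) := by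
          gcongr; exact oddTail_le h2k
      _ = 48 * ℓ.choose 5 * k ^ 6 * m ^ (ℓ - 5) := by ring
      _ < ℓ ^ 3 * (ℓ - 2) * (k * (k + 1)) ^ 4 * m ^ (ℓ - 5) :=
          Nat.mul_lt_mul_of_pos_right (choose_five_mul_pow_six_lt hℓ5 hk hK) (by positivity)
      _ = ℓ * (ℓ - 2) * (k * (k + 1)) ^ 2 * (ℓ * (k * (k + 1))) ^ 2 * m ^ (ℓ - 5) := by ring
      _ ≤ ℓ * (ℓ - 2) * (k * (k + 1)) ^ 2 * m ^ 2 * m ^ (ℓ - 5) := by gcongr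
      _ = ℓ * (ℓ - 2) * (k * (k + 1)) ^ 2 * m ^ (ℓ - 3) := by
          rw [mul_assoc _ (m ^ 2), ← pow_add]; congr 2; omega

lemma twelve_mul_cube_lt_of_le {ℓ K m : ℕ} (hℓ : 3 ≤ ℓ) (hK : (ℓ - 2) ^ 2 ≤ 12 * K)
    (hm : m ≤ ℓ * K + (ℓ - 3) / 12) :
    12 * m ^ 3 < 12 * ℓ * K * m ^ 2 + ℓ * (ℓ - 1) * (ℓ - 2) * K ^ 2 := by
  obtain ⟨L, rfl⟩ : ∃ L, ℓ = L + 3 := ⟨ℓ - 3, by omega⟩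
  simp only [show L + 3 - 1 = L + 2 by omega, show L + 3 - 2 = L + 1 by omega,
    show L + 3 - 3 = L by omega] at *
  obtain ⟨q, hq⟩ : ∃ q, L / 12 = q := ⟨_, rfl⟩
  rw [hq] at hm
  have hqL : 12 * q ≤ L := by omega
  have hm2 : m ^ 2 ≤ ((L + 3) * K + q) ^ 2 := Nat.pow_le_pow_left hm 2
  have key : 12 * q * ((L + 3) * K + q) ^ 2 < (L + 3) * (L + 2) * (L + 1) * K ^ 2 := by
    have hKq : 12 * q ^ 2 + 2 * q + 1 ≤ K := by
      have : 144 * q ^ 2 + 24 * q + 1 ≤ (L + 1) ^ 2 := by nlinarith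
      omega
    have hcube : 12 * q ^ 3 < 2 * (L + 3) * K * (2 * q + 1) := by nlinarith
    have hsq : 24 * q ^ 2 * (L + 3) * K + 12 * q ^ 3 < 2 * (L + 3) * K ^ 2 := by nlinarith
    calc 12 * q * ((L + 3) * K + q) ^ 2
        = 12 * q * ((L + 3) * K) ^ 2 + (24 * q ^ 2 * (L + 3) * K + 12 * q ^ 3) := by ring
      _ < L * ((L + 3) * K) ^ 2 + 2 * (L + 3) * K ^ 2 := add_lt_add_of_le_of_lt (by gcongr) hsq
      _ = (L + 3) * (L + 2) * (L + 1) * K ^ 2 := by ring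
  calc 12 * m ^ 3 = 12 * m * m ^ 2 := by ring
    _ ≤ 12 * ((L + 3) * K + q) * m ^ 2 := by gcongr
    _ = 12 * (L + 3) * K * m ^ 2 + 12 * q * m ^ 2 := by ring
    _ ≤ 12 * (L + 3) * K * m ^ 2 + 12 * q * ((L + 3) * K + q) ^ 2 := by gcongr
    _ < _ := by omega

lemma add_le_twelve_mul_cube_of_lt {ℓ K m : ℕ} (hℓ : 3 ≤ ℓ) (hm : ℓ * K + (ℓ - 3) / 12 < m) :
    12 * ℓ * K * m ^ 2 + ℓ * (ℓ - 1) * (ℓ - 2) * K ^ 2 + ℓ * (ℓ - 2) * K ^ 2 ≤ 12 * m ^ 3 := by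
  obtain ⟨L, rfl⟩ : ∃ L, ℓ = L + 3 := ⟨ℓ - 3, by omega⟩
  simp only [show L + 3 - 1 = L + 2 by omega, show L + 3 - 2 = L + 1 by omega,
    show L + 3 - 3 = L by omega] at *
  have h12 : L + 1 ≤ 12 * (L / 12 + 1) := by omega
  have hm2 : ((L + 3) * K) ^ 2 ≤ m ^ 2 := Nat.pow_le_pow_left (by omega) 2
  calc 12 * (L + 3) * K * m ^ 2 + (L + 3) * (L + 2) * (L + 1) * K ^ 2 + (L + 3) * (L + 1) * K ^ 2
      = 12 * (L + 3) * K * m ^ 2 + (L + 1) * ((L + 3) * K) ^ 2 := by ring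
    _ ≤ 12 * (L + 3) * K * m ^ 2 + 12 * (L / 12 + 1) * m ^ 2 := by gcongr
    _ = 12 * ((L + 3) * K + L / 12 + 1) * m ^ 2 := by ring
    _ ≤ 12 * m * m ^ 2 := by gcongr; omega
    _ = 12 * m ^ 3 := by ring

theorem K_lt_general (ℓ k n : ℕ) (hℓ : 3 ≤ ℓ) (hk : 0 < k)
    (heq : ∑ i ∈ Finset.range (k + 1), (n + i) ^ ℓ =
        ∑ i ∈ Finset.Icc (k + 1) (2 * k), (n + i) ^ ℓ) :
    (k : ℝ) * ((k : ℝ) + 1) < ((ℓ : ℝ) - 2) ^ 2 / 12 := by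
  by_contra! hcon
  have hK : (ℓ - 2) ^ 2 ≤ 12 * (k * (k + 1)) := by
    have : (((ℓ - 2) ^ 2 : ℕ) : ℝ) ≤ ((12 * (k * (k + 1)) : ℕ) : ℝ) := by
      push_cast [Nat.cast_sub (show 2 ≤ ℓ by omega)]
      linarith
    exact_mod_cast this
  have hid := twelve_mul_sum_oddTerm hℓ k (n + k)
  rw [← pow_eq_sum_oddTerm heq, ← pow_mul_pow_sub (n + k) hℓ] at hid
  have hpos : 0 < (n + k) ^ (ℓ - 3) := by positivity
  rcases le_or_gt (n + k) (ℓ * (k * (k + 1)) + (ℓ - 3) / 12) with hm | hm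
  · have := Nat.mul_lt_mul_of_pos_right (twelve_mul_cube_lt_of_le hℓ hK hm) hpos
    linarith
  · have := Nat.mul_le_mul_right ((n + k) ^ (ℓ - 3)) (add_le_twelve_mul_cube_of_lt hℓ hm)
    have := twelve_mul_oddTail_lt hℓ hk hK (m := n + k) (by omega)
    linarith

/-- If `ℓ ≥ 3` and `(k, n)` is a positive solution of equation (1), then
`k(k+1) < (ℓ-2)²/12`. -/
theorem K_lt (ℓ k n : ℕ) (hℓ : 3 ≤ ℓ) (hk : 0 < k) (hn : 0 < n)
    (heq : ∑ i ∈ Finset.range (k + 1), (n + i) ^ ℓ =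
        ∑ i ∈ Finset.Icc (k + 1) (2 * k), (n + i) ^ ℓ) :
    (k : ℝ) * ((k : ℝ) + 1) < ((ℓ : ℝ) - 2) ^ 2 / 12 :=
  K_lt_general ℓ k n hℓ hk heq
end

section
/- Let ℓ ≥ 6 be even, let k, n be positive integers satisfying ∑_{i=0}^{k} (n+i)^ℓ = ∑_{i=k+1}^{2k} (n+i)^ℓ, set w = n + k, f = ν₂(k(k+1)), g = ν₂(w), e = ν₂(ℓ), and s = 2^{(2f−1)+2g+e}. Then w^{ℓ−1} ≡ ℓ·w^{ℓ−2}·k(k+1) + 2ℓ·∑_{i=1}^{k} i^{ℓ−1} (mod s). -/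
/-!
Reflecting the left-hand side, equation (1) says `w ^ ℓ = ∑_{j ≤ k} ((w + j) ^ ℓ - (w - j) ^ ℓ)`.
Expanding binomially and dividing by `w` (`ℓ` is even) writes `w ^ (ℓ - 1)` as
`2 ∑_{i odd} C(ℓ, i) w ^ (i - 1) S (ℓ - i)` with `S r = ∑_{j ≤ k} j ^ r`. The terms `i = 1` and
`i = ℓ - 1` are the right-hand side of the congruence; every other term is divisible by `s`, because
`2 ^ e ∣ C(ℓ, i)` for odd `i`, `2 ^ (2g) ∣ w ^ (i - 1)`, and `2 ^ (2f - 2) ∣ S r` for odd `r ≥ 3`.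

For the last fact let `2 ^ f ∣ q`. Splitting `[0, 2q)` into two halves gives
`2 ^ f ∣ 2 ∑_{j < q} j ^ r` for every `r`, and comparing `∑_{j < q} j ^ r` with its reflection
`∑_{j < q} (q - j) ^ r` modulo `q ^ 2` gives `2 ∑_{j < q} j ^ r ≡ r q ∑_{j < q} j ^ (r - 1) - q ^ r`
for odd `r`.
-/

open Finset

lemma dvd_sum_range_two_mul_pow_sub (q r : ℕ) :
    (q : ℤ) ∣ ∑ j ∈ range (2 * q), (j : ℤ) ^ r - 2 * ∑ j ∈ range q, (j : ℤ) ^ r := by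
  have hsplit : ∑ j ∈ range (2 * q), (j : ℤ) ^ r - 2 * ∑ j ∈ range q, (j : ℤ) ^ r
      = ∑ j ∈ range q, (((q + j : ℕ) : ℤ) ^ r - (j : ℤ) ^ r) := by
    rw [two_mul, sum_range_add, sum_sub_distrib]; ring
  rw [hsplit]
  refine dvd_sum fun j _ => ?_
  simpa using sub_dvd_pow_sub_pow ((q + j : ℕ) : ℤ) j r

lemma two_pow_dvd_two_mul_sum_range_pow {f q : ℕ} (r : ℕ) (hq : 2 ^ f ∣ q) :
    (2 : ℤ) ^ f ∣ 2 * ∑ j ∈ range q, (j : ℤ) ^ r := by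
  induction f generalizing q with
  | zero => simp
  | succ f ih =>
    obtain ⟨q, rfl⟩ : 2 ∣ q := (dvd_pow_self 2 f.succ_ne_zero).trans hq
    have hq' : 2 ^ f ∣ q := Nat.dvd_of_mul_dvd_mul_left two_pos (pow_succ' 2 f ▸ hq)
    have hdouble : (2 : ℤ) ^ f ∣
        ∑ j ∈ range (2 * q), (j : ℤ) ^ r - 2 * ∑ j ∈ range q, (j : ℤ) ^ r := by
      have := (Int.natCast_dvd_natCast.2 hq').trans (dvd_sum_range_two_mul_pow_sub q r)
      push_cast at this
      exact this
    rw [pow_succ']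
    exact (mul_dvd_mul_left 2 (dvd_add hdouble (ih hq'))).trans (dvd_of_eq (by ring))

lemma sum_range_sub_pow (q : ℕ) {m : ℕ} (hm : m ≠ 0) :
    ∑ j ∈ range q, ((q : ℤ) - j) ^ m = ∑ j ∈ range q, (j : ℤ) ^ m + q ^ m := by
  calc ∑ j ∈ range q, ((q : ℤ) - j) ^ m
      = ∑ j ∈ range q, (((q - 1 - j : ℕ) : ℤ) + 1) ^ m := by
        refine sum_congr rfl fun j hj => ?_
        rw [Nat.cast_sub (by grind), Nat.cast_sub (by grind)]
        ring
    _ = ∑ j ∈ range q, ((j : ℤ) + 1) ^ m := sum_range_reflect (fun j => ((j : ℤ) + 1) ^ m) q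
    _ = ∑ j ∈ range q, (j : ℤ) ^ m + q ^ m := by
        rw [← sum_range_succ, sum_range_succ']
        simp [hm]

lemma sq_dvd_two_mul_sum_range_pow_add_pow_sub (q : ℕ) {m : ℕ} (hm : Odd m) :
    (q : ℤ) ^ 2 ∣ 2 * ∑ j ∈ range q, (j : ℤ) ^ m + q ^ m -
      m * q * ∑ j ∈ range q, (j : ℤ) ^ (m - 1) := by
  have hsum := dvd_sum fun j (_ : j ∈ range q) => sq_dvd_add_pow_sub_sub (q : ℤ) (-(j : ℤ)) m
  have heven : Even (m - 1) := Nat.Odd.sub_odd hm odd_one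
  simp only [heven.neg_pow, hm.neg_pow, neg_add_eq_sub, sum_sub_distrib,
    sum_range_sub_pow q hm.pos.ne', ← sum_mul, sum_neg_distrib] at hsum
  exact hsum.trans (dvd_of_eq (by ring))

lemma two_pow_dvd_four_mul_sum_range_pow {f q m : ℕ} (hq : 2 ^ f ∣ q) (hm : Odd m)
    (hm1 : m ≠ 1) :
    (2 : ℤ) ^ (2 * f) ∣ 4 * ∑ j ∈ range q, (j : ℤ) ^ m := by
  have hq' : (2 : ℤ) ^ f ∣ q := by exact_mod_cast hq
  have hsq : (2 : ℤ) ^ (2 * f) ∣ (q : ℤ) ^ 2 := by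
    rw [mul_comm, pow_mul]; exact pow_dvd_pow_of_dvd hq' 2
  have hm2 : 2 ≤ m := by grind
  have h1 := hsq.trans (sq_dvd_two_mul_sum_range_pow_add_pow_sub q hm)
  have h2 := hsq.trans (pow_dvd_pow (q : ℤ) hm2)
  have h3 : (2 : ℤ) ^ (2 * f) ∣ q * (2 * ∑ j ∈ range q, (j : ℤ) ^ (m - 1)) := by
    rw [two_mul, pow_add]
    exact mul_dvd_mul hq' (two_pow_dvd_two_mul_sum_range_pow _ hq)
  refine (dvd_add (dvd_sub (dvd_mul_of_dvd_right h1 2) (dvd_mul_of_dvd_right h2 2))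
    (dvd_mul_of_dvd_right h3 m)).trans (dvd_of_eq ?_)
  ring

lemma two_pow_dvd_four_mul_sum_range_succ_pow {f k m : ℕ} (hk : 2 ^ f ∣ k * (k + 1))
    (hm : Odd m) (hm1 : m ≠ 1) :
    (2 : ℤ) ^ (2 * f) ∣ 4 * ∑ j ∈ range (k + 1), (j : ℤ) ^ m := by
  rcases Nat.even_or_odd k with hk_even | hk_odd
  · have hdvd : 2 ^ f ∣ k :=
      (Nat.Coprime.pow_left f (Nat.coprime_two_left.2 hk_even.add_one)).dvd_of_dvd_mul_right hk
    have hpow : (2 : ℤ) ^ (2 * f) ∣ (k : ℤ) ^ m := by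
      rw [mul_comm, pow_mul]
      exact (pow_dvd_pow_of_dvd (by exact_mod_cast hdvd) 2).trans (pow_dvd_pow _ (by grind))
    rw [sum_range_succ, mul_add]
    exact dvd_add (two_pow_dvd_four_mul_sum_range_pow hdvd hm hm1) (dvd_mul_of_dvd_right hpow 4)
  · exact two_pow_dvd_four_mul_sum_range_pow
      ((Nat.Coprime.pow_left f (Nat.coprime_two_left.2 hk_odd)).dvd_of_dvd_mul_left hk) hm hm1

lemma Nat.Coprime.dvd_choose_of_dvd {a n t : ℕ} (ht : a.Coprime t) (hn : a ∣ n) :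
    a ∣ n.choose t := by
  rcases t with _ | t
  · simp_all
  rcases n with _ | n
  · simp
  refine ht.dvd_of_dvd_mul_right ?_
  rw [← Nat.add_one_mul_choose_eq]
  exact dvd_mul_of_dvd_left hn _

lemma pow_eq_sum_range_add_pow_sub_sub_pow {n k ℓ : ℕ}
    (heq : ∑ i ∈ range (k + 1), (n + i) ^ ℓ = ∑ i ∈ Icc (k + 1) (2 * k), (n + i) ^ ℓ) :
    ((n : ℤ) + k) ^ ℓ = ∑ j ∈ range (k + 1), (((n : ℤ) + k + j) ^ ℓ - ((n : ℤ) + k - j) ^ ℓ) := by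
  have h := congrArg (Nat.cast : ℕ → ℤ) heq
  push_cast at h
  have hlow : ∑ i ∈ range (k + 1), ((n : ℤ) + i) ^ ℓ =
      ∑ j ∈ range (k + 1), ((n : ℤ) + k - j) ^ ℓ := by
    rw [← sum_range_reflect (fun i => ((n : ℤ) + i) ^ ℓ)]
    refine sum_congr rfl fun j hj => ?_
    rw [Nat.add_sub_cancel, Nat.cast_sub (mem_range_succ_iff.1 hj)]
    ring
  have hhigh : ∑ i ∈ Icc (k + 1) (2 * k), ((n : ℤ) + i) ^ ℓ =
      ∑ j ∈ range (k + 1), ((n : ℤ) + k + j) ^ ℓ - ((n : ℤ) + k) ^ ℓ := by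
    rw [← Ico_add_one_right_eq_Icc, sum_Ico_eq_sum_range, sum_range_succ',
      show 2 * k + 1 - (k + 1) = k by omega]
    push_cast
    ring_nf
  rw [sum_sub_distrib]
  linarith

lemma sum_add_pow_sub_sub_pow {R ι : Type*} [CommRing R] (x : R) (y : ι → R) (s : Finset ι)
    (ℓ : ℕ) :
    ∑ j ∈ s, ((x + y j) ^ ℓ - (x - y j) ^ ℓ) =
      ∑ m ∈ range (ℓ + 1), ℓ.choose m * x ^ m * (1 - (-1) ^ (ℓ - m)) * ∑ j ∈ s, y j ^ (ℓ - m) := by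
  calc ∑ j ∈ s, ((x + y j) ^ ℓ - (x - y j) ^ ℓ)
      = ∑ j ∈ s, ∑ m ∈ range (ℓ + 1),
          ℓ.choose m * x ^ m * (1 - (-1) ^ (ℓ - m)) * y j ^ (ℓ - m) := by
        refine sum_congr rfl fun j _ => ?_
        rw [sub_eq_add_neg x, add_pow, add_pow, ← sum_sub_distrib]
        refine sum_congr rfl fun m _ => ?_
        rw [neg_pow]
        ring
    _ = _ := by
        rw [sum_comm]
        simp only [mul_sum]

/-- The `w ^ (m + 1)`-term of `∑_{j ≤ k} ((w + j) ^ ℓ - (w - j) ^ ℓ)`, divided by `w`. -/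
def expansionTerm (ℓ k : ℕ) (w : ℤ) (m : ℕ) : ℤ :=
  ℓ.choose (m + 1) * w ^ m * (1 - (-1) ^ (ℓ - (m + 1))) *
    ∑ j ∈ range (k + 1), (j : ℤ) ^ (ℓ - (m + 1))

lemma pow_pred_eq_sum_expansionTerm {n k ℓ : ℕ} (hℓ : Even ℓ) (hℓ0 : ℓ ≠ 0) (hk : k ≠ 0)
    (heq : ∑ i ∈ range (k + 1), (n + i) ^ ℓ = ∑ i ∈ Icc (k + 1) (2 * k), (n + i) ^ ℓ) :
    ((n : ℤ) + k) ^ (ℓ - 1) = ∑ m ∈ range ℓ, expansionTerm ℓ k (n + k) m := by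
  have hw : (n : ℤ) + k ≠ 0 := by omega
  apply mul_left_cancel₀ hw
  rw [← pow_succ', Nat.sub_add_cancel (Nat.one_le_iff_ne_zero.2 hℓ0),
    pow_eq_sum_range_add_pow_sub_sub_pow heq, sum_add_pow_sub_sub_pow, sum_range_succ']
  simp only [Nat.sub_zero, hℓ.neg_one_pow, sub_self, mul_zero, zero_mul, add_zero]
  rw [mul_sum]
  refine sum_congr rfl fun m _ => ?_
  rw [expansionTerm]
  ring

lemma expansionTerm_zero {ℓ : ℕ} (k : ℕ) (w : ℤ) (hℓ : Even ℓ) (hℓ0 : ℓ ≠ 0) :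
    expansionTerm ℓ k w 0 = 2 * ℓ * ∑ j ∈ range (k + 1), (j : ℤ) ^ (ℓ - 1) := by
  have hodd : Odd (ℓ - 1) := Nat.Even.sub_odd (Nat.one_le_iff_ne_zero.2 hℓ0) hℓ odd_one
  rw [expansionTerm, zero_add, hodd.neg_one_pow, Nat.choose_one_right]
  ring

lemma expansionTerm_sub_two {ℓ : ℕ} (k : ℕ) (w : ℤ) (hℓ : 2 ≤ ℓ) :
    expansionTerm ℓ k w (ℓ - 2) = ℓ * w ^ (ℓ - 2) * (k * (k + 1)) := by
  have hgauss : (∑ j ∈ range (k + 1), (j : ℤ)) * 2 = ((k : ℤ) + 1) * k := by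
    simpa using congrArg (Nat.cast : ℕ → ℤ) (sum_range_id_mul_two (k + 1))
  rw [expansionTerm, show ℓ - (ℓ - 2 + 1) = 1 by omega, show ℓ - 2 + 1 = ℓ - 1 by omega,
    Nat.choose_symm (by omega), Nat.choose_one_right]
  simp only [pow_one]
  linear_combination (ℓ : ℤ) * w ^ (ℓ - 2) * hgauss

lemma two_pow_dvd_expansionTerm {ℓ k e g f m : ℕ} {w : ℤ} (hℓ : Even ℓ) (hm0 : m ≠ 0)
    (hm2 : m + 2 ≠ ℓ) (he : 2 ^ e ∣ ℓ) (hg : (2 : ℤ) ^ g ∣ w) (hf : 2 ^ f ∣ k * (k + 1))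
    (hf0 : f ≠ 0) :
    (2 : ℤ) ^ (2 * f - 1 + 2 * g + e) ∣ expansionTerm ℓ k w m := by
  rcases Nat.even_or_odd (ℓ - (m + 1)) with hpar | hpar
  · simp [expansionTerm, hpar.neg_one_pow]
  have hℓ2 := Nat.even_iff.1 hℓ
  have hpar2 := Nat.odd_iff.1 hpar
  have hC : 2 ^ e ∣ ℓ.choose (m + 1) :=
    (Nat.Coprime.pow_left e (Nat.coprime_two_left.2 (Nat.odd_iff.2 (by omega)))).dvd_choose_of_dvd
      he
  have hW : (2 : ℤ) ^ (2 * g) ∣ w ^ m := by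
    rw [mul_comm, pow_mul]
    exact (pow_dvd_pow_of_dvd hg 2).trans (pow_dvd_pow w (by omega))
  have hP := two_pow_dvd_four_mul_sum_range_succ_pow hf hpar (by omega)
  rw [expansionTerm, hpar.neg_one_pow, ← mul_dvd_mul_iff_left (two_ne_zero' ℤ), ← pow_succ',
    show 2 * f - 1 + 2 * g + e + 1 = e + 2 * g + 2 * f by omega, pow_add, pow_add]
  refine (mul_dvd_mul (mul_dvd_mul (Int.natCast_dvd_natCast.2 hC) hW) hP).trans (dvd_of_eq ?_)
  push_cast
  ring

theorem congruence_even_general (ℓ k n w : ℕ) (hℓ : 6 ≤ ℓ) (heven : Even ℓ)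
    (hk : 0 < k) (hw : w = n + k)
    (heq : ∑ i ∈ Finset.range (k + 1), (n + i) ^ ℓ =
        ∑ i ∈ Finset.Icc (k + 1) (2 * k), (n + i) ^ ℓ)
    (f g e s : ℕ) (hf : f = padicValNat 2 (k * (k + 1)))
    (hg : g = padicValNat 2 w) (he : e = padicValNat 2 ℓ)
    (hs : s = 2 ^ ((2 * f - 1) + 2 * g + e)) :
    w ^ (ℓ - 1) ≡ ℓ * w ^ (ℓ - 2) * (k * (k + 1)) +
      2 * ℓ * ∑ i ∈ Finset.Icc 1 k, i ^ (ℓ - 1) [MOD s] := by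
  have hf0 : f ≠ 0 := by
    rw [hf]
    exact Nat.pos_iff_ne_zero.1
      (one_le_padicValNat_of_dvd (by positivity) (Nat.even_mul_succ_self k).two_dvd)
  have hwg : (2 : ℤ) ^ g ∣ (n : ℤ) + k := by
    have h : 2 ^ g ∣ w := hg ▸ pow_padicValNat_dvd
    exact_mod_cast hw ▸ h
  have hexp := congrArg (Int.cast : ℤ → ZMod s)
    (pow_pred_eq_sum_expansionTerm heven (by omega) hk.ne' heq)
  rw [Int.cast_sum, sum_eq_add 0 (ℓ - 2) (by omega) ?_ (by simp; omega) (by simp; omega),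
    expansionTerm_zero k _ heven (by omega), expansionTerm_sub_two k _ (by omega)] at hexp
  · rw [range_eq_Ico, sum_eq_sum_Ico_succ_bot (by omega), Ico_add_one_right_eq_Icc] at hexp
    rw [← ZMod.natCast_eq_natCast_iff, hw]
    push_cast at hexp ⊢
    rw [hexp, zero_pow (by omega), zero_add, add_comm]
  · rintro m - ⟨hm0, hm2⟩
    rw [ZMod.intCast_zmod_eq_zero_iff_dvd, hs]
    push_cast
    exact two_pow_dvd_expansionTerm heven hm0 (by omega) (he ▸ pow_padicValNat_dvd) hwg
      (hf ▸ pow_padicValNat_dvd) hf0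

/-- For even `ℓ ≥ 6` and a positive solution `(k, n)` of equation (1), with `w = n + k`,
`f = ν₂(k(k+1))`, `g = ν₂(w)`, `e = ν₂(ℓ)` and `s = 2^{(2f-1)+2g+e}`, one has
`w^{ℓ-1} ≡ ℓ·w^{ℓ-2}·k(k+1) + 2ℓ·∑_{i=1}^k i^{ℓ-1} (mod s)`. -/
theorem congruence_even (ℓ k n w : ℕ) (hℓ : 6 ≤ ℓ) (heven : Even ℓ)
    (hk : 0 < k) (hn : 0 < n) (hw : w = n + k)
    (heq : ∑ i ∈ Finset.range (k + 1), (n + i) ^ ℓ =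
        ∑ i ∈ Finset.Icc (k + 1) (2 * k), (n + i) ^ ℓ)
    (f g e s : ℕ) (hf : f = padicValNat 2 (k * (k + 1)))
    (hg : g = padicValNat 2 w) (he : e = padicValNat 2 ℓ)
    (hs : s = 2 ^ ((2 * f - 1) + 2 * g + e)) :
    w ^ (ℓ - 1) ≡ ℓ * w ^ (ℓ - 2) * (k * (k + 1)) +
      2 * ℓ * ∑ i ∈ Finset.Icc 1 k, i ^ (ℓ - 1) [MOD s] :=
  congruence_even_general ℓ k n w hℓ heven hk hw heq f g e s hf hg he hs
end

section
/- Let ℓ ≥ 5 be odd, let k, n be positive integers satisfying ∑_{i=0}^{k} (n+i)^ℓ = ∑_{i=k+1}^{2k} (n+i)^ℓ, set w = n + k, f = ν₂(k(k+1)), g = ν₂(w), and s = 2^{(2f−1)+2g}. Then w^ℓ ≡ ℓ·w^{ℓ−1}·k(k+1) + 2·∑_{i=1}^{k} i^ℓ (mod s). -/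
open Finset

/-!
Put `w = n + k` and `S_e(K) = ∑_{i < K} i^e`. Equation (1) says
`w^ℓ = ∑_{j ≤ k} ((w + j)^ℓ - (w - j)^ℓ)`, and binomial expansion turns the right side into
`∑_m (1 - (-1)^(ℓ-m)) C(ℓ,m) w^m S_{ℓ-m}(k+1)`. The terms `m = 0` and `m = ℓ - 1` give the
right side of the congruence (as `2 S_1(k+1) = k(k+1)`); in each other nonzero term `m ≥ 2` is
even, so `4^g ∣ w^m`, and `e = ℓ - m ≥ 3` is odd, where `2^(2f-1) ∣ 2 S_e(k+1)`.

For the latter let `K ∈ {k, k+1}` be the factor with `2^f ∣ K`. Pairing `i` with `K - i` gives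
`2 S_e(K+1) ≡ e K S_{e-1}(K+1) (mod K²)`. As `i^d mod N` has period `N`, `S_d(N u) ≡ u S_d(N)
(mod N)`; by induction on `t` this gives `2^(t-1) ∣ S_d(2^t)`, hence `2^(t-1) ∣ S_d(K)` whenever
`2^t ∣ K`, and so `2^(2f-1) ∣ e K S_{e-1}(K+1)`.
-/

def powSum (e K : ℕ) : ℤ := ∑ i ∈ range K, (i : ℤ) ^ e

theorem powSum_succ (e K : ℕ) : powSum e (K + 1) = powSum e K + (K : ℤ) ^ e :=
  sum_range_succ _ _

theorem powSum_mul_modEq (e N M : ℕ) : powSum e (N * M) ≡ M * powSum e N [ZMOD N] := by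
  induction M with
  | zero => simp [powSum]
  | succ M ih =>
    have hshift : ∑ i ∈ range N, ((N * M + i : ℕ) : ℤ) ^ e ≡ powSum e N [ZMOD N] :=
      Int.ModEq.sum fun i _ => Int.ModEq.pow e <| by
        push_cast
        exact (Int.modEq_iff_dvd.2 ⟨-M, by ring⟩)
    rw [Nat.mul_succ, powSum, sum_range_add, ← powSum]
    push_cast
    simpa [add_mul] using ih.add hshift

theorem two_pow_pred_dvd_powSum_two_pow (e t : ℕ) : (2 : ℤ) ^ (t - 1) ∣ powSum e (2 ^ t) := by
  induction t with
  | zero => simp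
  | succ t ih =>
    have hdouble := (powSum_mul_modEq e (2 ^ t) 2).symm.dvd
    rw [← pow_succ] at hdouble
    push_cast at hdouble
    have h2 : (2 : ℤ) ^ t ∣ 2 * powSum e (2 ^ t) :=
      (pow_dvd_pow 2 (by omega)).trans (pow_succ' (2 : ℤ) (t - 1) ▸ mul_dvd_mul_left 2 ih)
    exact (dvd_sub_left h2).1 hdouble

theorem two_pow_pred_dvd_powSum (e t K : ℕ) (h : 2 ^ t ∣ K) : (2 : ℤ) ^ (t - 1) ∣ powSum e K := by
  obtain ⟨u, rfl⟩ := h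
  have hper := (powSum_mul_modEq e (2 ^ t) u).of_dvd <| by
    push_cast
    exact pow_dvd_pow 2 (Nat.sub_le t 1)
  exact (dvd_sub_left (dvd_mul_of_dvd_right (two_pow_pred_dvd_powSum_two_pow e t) _)).1
    (dvd_sub_comm.1 hper.dvd)

theorem two_mul_powSum_modEq (m K : ℕ) (hm : Odd m) :
    2 * powSum m (K + 1) ≡ m * K * powSum (m - 1) (K + 1) [ZMOD (K : ℤ) ^ 2] := by
  have hreflect : ∑ i ∈ range (K + 1), ((K : ℤ) - i) ^ m = powSum m (K + 1) := by
    rw [powSum, ← sum_range_reflect]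
    refine sum_congr rfl fun i hi => ?_
    rw [Nat.add_sub_cancel, Nat.cast_sub (mem_range_succ_iff.1 hi)]
    ring
  have hpair (i : ℕ) :
      (i : ℤ) ^ m + ((K : ℤ) - i) ^ m ≡ m * K * (i : ℤ) ^ (m - 1) [ZMOD (K : ℤ) ^ 2] := by
    have h := sq_dvd_add_pow_sub_sub (K : ℤ) (-(i : ℤ)) m
    rw [hm.neg_pow, (Nat.Odd.sub_odd hm odd_one).neg_pow, neg_add_eq_sub] at h
    refine (Int.modEq_iff_dvd.2 ?_).symm
    rwa [show (i : ℤ) ^ m + ((K : ℤ) - i) ^ m - m * K * (i : ℤ) ^ (m - 1) =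
      ((K : ℤ) - i) ^ m - (i : ℤ) ^ (m - 1) * K * m - -(i : ℤ) ^ m by ring]
  calc 2 * powSum m (K + 1) = ∑ i ∈ range (K + 1), ((i : ℤ) ^ m + ((K : ℤ) - i) ^ m) := by
        rw [sum_add_distrib, hreflect, powSum]; ring
    _ ≡ ∑ i ∈ range (K + 1), (m * K * (i : ℤ) ^ (m - 1)) [ZMOD (K : ℤ) ^ 2] :=
        Int.ModEq.sum fun i _ => hpair i
    _ = m * K * powSum (m - 1) (K + 1) := by rw [powSum, mul_sum]

theorem two_pow_dvd_two_mul_powSum_succ (e f K : ℕ) (he : Odd e) (he3 : 3 ≤ e)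
    (hK : 2 ^ f ∣ K) : (2 : ℤ) ^ (2 * f - 1) ∣ 2 * powSum e (K + 1) := by
  have hK' : (2 : ℤ) ^ f ∣ K := by exact_mod_cast hK
  have hsq : (2 : ℤ) ^ (2 * f - 1) ∣ (K : ℤ) ^ 2 :=
    (pow_dvd_pow 2 (Nat.sub_le _ 1)).trans (pow_mul' (2 : ℤ) 2 f ▸ pow_dvd_pow_of_dvd hK' 2)
  have hS : (2 : ℤ) ^ (f - 1) ∣ powSum (e - 1) (K + 1) := by
    rw [powSum_succ]
    exact dvd_add (two_pow_pred_dvd_powSum _ _ _ hK)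
      (((pow_dvd_pow 2 (Nat.sub_le f 1)).trans hK').trans (dvd_pow_self _ (by omega)))
  have hmain : (2 : ℤ) ^ (2 * f - 1) ∣ e * K * powSum (e - 1) (K + 1) := by
    rw [mul_assoc, show 2 * f - 1 = f + (f - 1) by omega, pow_add]
    exact dvd_mul_of_dvd_right (mul_dvd_mul hK' hS) _
  exact (dvd_sub_right hmain).1 (hsq.trans (two_mul_powSum_modEq e K he).dvd)

theorem two_pow_dvd_two_mul_powSum (e f K : ℕ) (he : Odd e) (he3 : 3 ≤ e)
    (hK : 2 ^ f ∣ K) : (2 : ℤ) ^ (2 * f - 1) ∣ 2 * powSum e K := by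
  have hK' : (2 : ℤ) ^ f ∣ K := by exact_mod_cast hK
  have hlast : (2 : ℤ) ^ (2 * f - 1) ∣ 2 * (K : ℤ) ^ e := by
    refine dvd_mul_of_dvd_right ((pow_dvd_pow 2 (Nat.sub_le _ 1)).trans ?_) 2
    exact (pow_mul' (2 : ℤ) 2 f ▸ pow_dvd_pow_of_dvd hK' 2).trans (pow_dvd_pow _ (by omega))
  have h := two_pow_dvd_two_mul_powSum_succ e f K he he3 hK
  rw [powSum_succ, mul_add] at h
  exact (dvd_add_left hlast).1 h

theorem two_pow_dvd_or_two_pow_dvd_succ {f k : ℕ} (h : 2 ^ f ∣ k * (k + 1)) :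
    2 ^ f ∣ k ∨ 2 ^ f ∣ k + 1 := by
  rcases Nat.even_or_odd k with hk | hk
  · exact .inl <|
      (Nat.Coprime.pow_left f (Nat.coprime_two_left.2 hk.add_one)).dvd_of_dvd_mul_right h
  · exact .inr <| (Nat.Coprime.pow_left f (Nat.coprime_two_left.2 hk)).dvd_of_dvd_mul_left h

theorem two_pow_dvd_two_mul_powSum_of_dvd_mul_succ (e f k : ℕ) (he : Odd e) (he3 : 3 ≤ e)
    (hk : 2 ^ f ∣ k * (k + 1)) : (2 : ℤ) ^ (2 * f - 1) ∣ 2 * powSum e (k + 1) := by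
  rcases two_pow_dvd_or_two_pow_dvd_succ hk with hk | hk
  · exact two_pow_dvd_two_mul_powSum_succ e f k he he3 hk
  · exact two_pow_dvd_two_mul_powSum e f (k + 1) he he3 hk

theorem two_mul_powSum_one (k : ℕ) : 2 * powSum 1 (k + 1) = (k : ℤ) * (k + 1) := by
  have h := sum_range_id_mul_two (k + 1)
  rw [Nat.add_sub_cancel] at h
  simp only [powSum, pow_one]
  have hz := congrArg (Nat.cast : ℕ → ℤ) h
  push_cast at hz
  linear_combination hz

theorem add_pow_sub_sub_pow_eq_sum {R : Type*} [CommRing R] (x y : R) (ℓ : ℕ) :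
    (x + y) ^ ℓ - (x - y) ^ ℓ =
      ∑ m ∈ range (ℓ + 1), (1 - (-1) ^ (ℓ - m)) * ℓ.choose m * x ^ m * y ^ (ℓ - m) := by
  rw [sub_eq_add_neg x y, add_pow, add_pow, ← sum_sub_distrib]
  exact sum_congr rfl fun m _ => by rw [neg_pow]; ring

theorem sum_range_add_pow_sub_sub_pow_eq (W : ℤ) (ℓ K : ℕ) :
    ∑ j ∈ range K, ((W + j) ^ ℓ - (W - j) ^ ℓ) =
      ∑ m ∈ range (ℓ + 1), (1 - (-1) ^ (ℓ - m)) * ℓ.choose m * W ^ m * powSum (ℓ - m) K := by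
  simp_rw [add_pow_sub_sub_pow_eq_sum, powSum, mul_sum]
  exact sum_comm

theorem two_pow_dvd_binomial_term (ℓ k f g m : ℕ) (W : ℤ) (hodd : Odd ℓ) (hm1 : 1 ≤ m)
    (hmℓ : m + 2 ≤ ℓ) (hf : 2 ^ f ∣ k * (k + 1)) (hg : (2 : ℤ) ^ g ∣ W) :
    (2 : ℤ) ^ ((2 * f - 1) + 2 * g) ∣
      (1 - (-1) ^ (ℓ - m)) * ℓ.choose m * W ^ m * powSum (ℓ - m) (k + 1) := by
  rcases Nat.even_or_odd (ℓ - m) with he | ho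
  · simp [he.neg_one_pow]
  have hm2 : 2 ≤ m := by
    obtain ⟨j, hj⟩ := Nat.sub_sub_self (by omega : m ≤ ℓ) ▸ Nat.Odd.sub_odd hodd ho
    omega
  have hW : (2 : ℤ) ^ (2 * g) ∣ W ^ m :=
    (pow_mul' (2 : ℤ) 2 g ▸ pow_dvd_pow_of_dvd hg 2).trans (pow_dvd_pow W hm2)
  have hS := two_pow_dvd_two_mul_powSum_of_dvd_mul_succ _ f k ho
    (by obtain ⟨j, hj⟩ := ho; omega) hf
  rw [ho.neg_one_pow, add_comm, pow_add,
    show (1 - -1) * ℓ.choose m * W ^ m * powSum (ℓ - m) (k + 1) =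
      ℓ.choose m * (W ^ m * (2 * powSum (ℓ - m) (k + 1))) by ring]
  exact (mul_dvd_mul hW hS).mul_left _

theorem sum_range_add_pow_sub_sub_pow_modEq (ℓ k f g : ℕ) (W : ℤ) (hℓ : 3 ≤ ℓ) (hodd : Odd ℓ)
    (hf : 2 ^ f ∣ k * (k + 1)) (hg : (2 : ℤ) ^ g ∣ W) :
    ∑ j ∈ range (k + 1), ((W + j) ^ ℓ - (W - j) ^ ℓ) ≡
      ℓ * W ^ (ℓ - 1) * (k * (k + 1)) + 2 * powSum ℓ (k + 1)
        [ZMOD 2 ^ ((2 * f - 1) + 2 * g)] := by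
  set T : ℕ → ℤ := fun m => (1 - (-1) ^ (ℓ - m)) * ℓ.choose m * W ^ m * powSum (ℓ - m) (k + 1)
  have hsum : ∑ m ∈ range (ℓ - 2), T (m + 1) ≡ 0 [ZMOD 2 ^ ((2 * f - 1) + 2 * g)] :=
    Int.ModEq.sum_zero fun m hm => Int.modEq_zero_iff_dvd.2 <|
      two_pow_dvd_binomial_term ℓ k f g (m + 1) W hodd (by omega)
        (by have := mem_range.1 hm; omega) hf hg
  obtain ⟨L, rfl⟩ : ∃ L, ℓ = L + 2 := ⟨ℓ - 2, by omega⟩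
  have hT0 : T 0 = 2 * powSum (L + 2) (k + 1) := by
    simp only [T, Nat.sub_zero, hodd.neg_one_pow, Nat.choose_zero_right]
    ring
  have hT1 : T (L + 1) = (L + 2 : ℕ) * W ^ (L + 1) * (k * (k + 1)) := by
    simp only [T, Nat.add_sub_add_left, Nat.choose_succ_self_right, ← two_mul_powSum_one]
    push_cast
    ring
  have hT2 : T (L + 2) = 0 := by simp [T]
  rw [Nat.add_sub_cancel] at hsum
  rw [sum_range_add_pow_sub_sub_pow_eq, sum_range_succ, sum_range_succ, sum_range_succ']
  change ∑ m ∈ range L, T (m + 1) + T 0 + T (L + 1) + T (L + 2) ≡ _ [ZMOD _]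
  calc _ = ∑ m ∈ range L, T (m + 1) + ((L + 2 : ℕ) * W ^ (L + 2 - 1) * (k * (k + 1)) +
          2 * powSum (L + 2) (k + 1)) := by
            rw [hT0, hT1, hT2, show L + 2 - 1 = L + 1 by omega]; ring
    _ ≡ 0 + ((L + 2 : ℕ) * W ^ (L + 2 - 1) * (k * (k + 1)) + 2 * powSum (L + 2) (k + 1))
          [ZMOD _] := hsum.add_right _
    _ = _ := zero_add _

theorem powSum_succ_eq_sum_Icc (e K : ℕ) (he : e ≠ 0) :
    powSum e (K + 1) = ∑ i ∈ Icc 1 K, (i : ℤ) ^ e := by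
  rw [powSum, sum_range_eq_add_Ico _ (by omega : 0 < K + 1), Ico_add_one_right_eq_Icc]
  simp [he]

theorem sum_range_add_pow_eq_sum_range_sub_pow (n k ℓ : ℕ) :
    ∑ i ∈ range (k + 1), ((n + i : ℕ) : ℤ) ^ ℓ =
      ∑ j ∈ range (k + 1), (((n + k : ℕ) : ℤ) - j) ^ ℓ := by
  rw [← sum_range_reflect]
  refine sum_congr rfl fun j hj => ?_
  have hjk : j ≤ k := mem_range_succ_iff.1 hj
  rw [Nat.add_sub_cancel]
  push_cast [hjk]
  ring

theorem sum_range_add_pow_eq_add_sum_Icc (n k ℓ : ℕ) :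
    ∑ j ∈ range (k + 1), (n + k + j) ^ ℓ =
      (n + k) ^ ℓ + ∑ i ∈ Icc (k + 1) (2 * k), (n + i) ^ ℓ := by
  rw [sum_range_succ', add_comm, ← Ico_add_one_right_eq_Icc, sum_Ico_eq_sum_range,
    show 2 * k + 1 - (k + 1) = k by omega]
  simp only [add_zero, add_assoc, add_comm 1]

theorem pow_eq_sum_range_sub_pow {n k ℓ : ℕ}
    (heq : ∑ i ∈ range (k + 1), (n + i) ^ ℓ = ∑ i ∈ Icc (k + 1) (2 * k), (n + i) ^ ℓ) :
    ((n + k : ℕ) : ℤ) ^ ℓ =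
      ∑ j ∈ range (k + 1), ((((n + k : ℕ) : ℤ) + j) ^ ℓ - (((n + k : ℕ) : ℤ) - j) ^ ℓ) := by
  have hright : ∑ j ∈ range (k + 1), (((n + k : ℕ) : ℤ) + j) ^ ℓ =
      ((n + k : ℕ) : ℤ) ^ ℓ + ∑ i ∈ range (k + 1), ((n + i : ℕ) : ℤ) ^ ℓ := by
    have h := congrArg (Nat.cast : ℕ → ℤ) (sum_range_add_pow_eq_add_sum_Icc n k ℓ)
    rw [← heq] at h
    push_cast at h ⊢
    exact h
  rw [sum_sub_distrib, hright, sum_range_add_pow_eq_sum_range_sub_pow]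
  ring

theorem congruence_odd_general (ℓ k n w : ℕ) (hℓ : 5 ≤ ℓ) (hodd : Odd ℓ)
    (hw : w = n + k)
    (heq : ∑ i ∈ Finset.range (k + 1), (n + i) ^ ℓ =
        ∑ i ∈ Finset.Icc (k + 1) (2 * k), (n + i) ^ ℓ)
    (f g s : ℕ) (hf : f = padicValNat 2 (k * (k + 1)))
    (hg : g = padicValNat 2 w)
    (hs : s = 2 ^ ((2 * f - 1) + 2 * g)) :
    w ^ ℓ ≡ ℓ * w ^ (ℓ - 1) * (k * (k + 1)) +
      2 * ∑ i ∈ Finset.Icc 1 k, i ^ ℓ [MOD s] := by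
  have hfk : 2 ^ f ∣ k * (k + 1) := hf ▸ pow_padicValNat_dvd
  have hgw : (2 : ℤ) ^ g ∣ w := by exact_mod_cast hg ▸ pow_padicValNat_dvd
  have hcong := sum_range_add_pow_sub_sub_pow_modEq ℓ k f g w (by omega) hodd hfk hgw
  rw [hw, ← pow_eq_sum_range_sub_pow heq, powSum_succ_eq_sum_Icc ℓ k (by omega)] at hcong
  rw [hs, hw, ← Int.natCast_modEq_iff]
  exact_mod_cast hcong

/-- For odd `ℓ ≥ 5` and a positive solution `(k, n)` of equation (1), with `w = n + k`,
`f = ν₂(k(k+1))`, `g = ν₂(w)` and `s = 2^{(2f-1)+2g}`, one has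
`w^ℓ ≡ ℓ·w^{ℓ-1}·k(k+1) + 2·∑_{i=1}^k i^ℓ (mod s)`. -/
theorem congruence_odd (ℓ k n w : ℕ) (hℓ : 5 ≤ ℓ) (hodd : Odd ℓ)
    (hk : 0 < k) (hn : 0 < n) (hw : w = n + k)
    (heq : ∑ i ∈ Finset.range (k + 1), (n + i) ^ ℓ =
        ∑ i ∈ Finset.Icc (k + 1) (2 * k), (n + i) ^ ℓ)
    (f g s : ℕ) (hf : f = padicValNat 2 (k * (k + 1)))
    (hg : g = padicValNat 2 w)
    (hs : s = 2 ^ ((2 * f - 1) + 2 * g)) :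
    w ^ ℓ ≡ ℓ * w ^ (ℓ - 1) * (k * (k + 1)) +
      2 * ∑ i ∈ Finset.Icc 1 k, i ^ ℓ [MOD s] :=
  congruence_odd_general ℓ k n w hℓ hodd hw heq f g s hf hg hs
end
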